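/- arXiv:2404.19118 — 9 statements merged into one kernel-verified Lean document; each statement's English description precedes it below -/
import Mathlib

section
/- Identification of the concurrent counterfactual mean under treatment k by only-concurrent outcome regression (treated-arm part of Theorem 1, statement 1): under assumptions (I-k), (C-k) and (P-k), one has 𝔼[Yᵏ | V=1] = Σ_{(w,e): 𝒫(W=w,E=e,V=1)>0} μ_oc(k,w,e) · p(w,e | V=1). -/
open MeasureTheory Finset

/-- Conditional expectation given an event: `𝔼[X | B] := 𝔼[X · 1_B] / 𝒫(B)`. -/
noncomputable def condMean {Ω : Type*} [MeasurableSpace Ω] (P : Measure Ω)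
    (X : Ω → ℝ) (B : Set Ω) : ℝ :=
  (∫ ω, B.indicator X ω ∂P) / (P B).toReal

/-! The law of total expectation over the strata `(w, e)` of the concurrent units turns
`𝔼[Yᵏ | V=1]` into `Σ 𝔼[Yᵏ | W=w, E=e, V=1] · p(w,e | V=1)`. On a stratum of positive mass,
positivity makes the arm-`k` substratum non-null, so ignorability and then consistency replace
`𝔼[Yᵏ | W=w, E=e, V=1]` by `μ_oc(k,w,e)`; null strata contribute nothing to either side. -/

section TotalExpectation

variable {Ω ι : Type*}

theorem Set.indicator_eq_sum_indicator_fiber {M : Type*} [AddCommMonoid M] [Fintype ι]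
    (f : Ω → ι) (B : Set Ω) (X : Ω → M) (ω : Ω) :
    B.indicator X ω = ∑ i, {ω | f ω = i ∧ ω ∈ B}.indicator X ω := by
  classical
  simp only [Set.indicator_apply, Set.mem_ofPred_eq, ite_and, Finset.sum_ite_eq,
    Finset.mem_univ, if_true]

variable [MeasurableSpace Ω] (P : Measure Ω) [Fintype ι] [MeasurableSpace ι]
  [MeasurableSingletonClass ι] {f : Ω → ι} {B : Set Ω} {X : Ω → ℝ}

theorem integral_indicator_eq_sum_integral_indicator_fiber (hf : Measurable f)
    (hB : MeasurableSet B) (hX : Integrable X P) :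
    ∫ ω, B.indicator X ω ∂P = ∑ i, ∫ ω, {ω | f ω = i ∧ ω ∈ B}.indicator X ω ∂P := by
  have hfiber : ∀ i, MeasurableSet {ω | f ω = i ∧ ω ∈ B} := fun i =>
    (hf (measurableSet_singleton i)).inter hB
  rw [← integral_finsetSum _ fun i _ => hX.indicator (hfiber i)]
  exact integral_congr_ae (Filter.Eventually.of_forall
    (Set.indicator_eq_sum_indicator_fiber f B X))

theorem condMean_mul_toReal [IsFiniteMeasure P] (hB : MeasurableSet B) :
    condMean P X B * (P B).toReal = ∫ ω, B.indicator X ω ∂P := by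
  by_cases hPB : P B = 0
  · rw [integral_indicator hB, setIntegral_measure_zero X hPB, hPB, ENNReal.toReal_zero,
      mul_zero]
  · exact div_mul_cancel₀ _ (ENNReal.toReal_ne_zero.2 ⟨hPB, measure_ne_top P B⟩)

theorem condMean_eq_sum_condMean_fiber_mul [IsFiniteMeasure P] (hf : Measurable f)
    (hB : MeasurableSet B) (hX : Integrable X P) :
    condMean P X B = ∑ i, condMean P X {ω | f ω = i ∧ ω ∈ B} *
      ((P {ω | f ω = i ∧ ω ∈ B}).toReal / (P B).toReal) := by
  rw [condMean, integral_indicator_eq_sum_integral_indicator_fiber P hf hB hX, Finset.sum_div]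
  refine Finset.sum_congr rfl fun i _ => ?_
  have hfiber : MeasurableSet {ω | f ω = i ∧ ω ∈ B} := (hf (measurableSet_singleton i)).inter hB
  rw [← condMean_mul_toReal P hfiber, mul_div_assoc]

end TotalExpectation

theorem concurrent_mean_treated_identification_oc_general
    {Ω : Type*} [MeasurableSpace Ω] (P : Measure Ω) [IsProbabilityMeasure P]
    {𝓦 ℰ : Type*} [Fintype 𝓦] [Fintype ℰ]
    [MeasurableSpace 𝓦] [MeasurableSingletonClass 𝓦]
    [MeasurableSpace ℰ] [MeasurableSingletonClass ℰ]
    (W : Ω → 𝓦) (E : Ω → ℰ) (V : Ω → Fin 2) {K : ℕ} (A : Ω → Fin (K + 1))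
    (k : Fin (K + 1)) (Y Yk : Ω → ℝ)
    (hW : Measurable W) (hE : Measurable E) (hV : Measurable V)
    (hYk : Integrable Yk P)
    -- (I-k) weak A-ignorability for arm k among concurrent units
    (hIk : ∀ (w : 𝓦) (e : ℰ), 0 < P {ω | A ω = k ∧ W ω = w ∧ E ω = e ∧ V ω = 1} →
      condMean P Yk {ω | W ω = w ∧ E ω = e ∧ V ω = 1} =
        condMean P Yk {ω | A ω = k ∧ W ω = w ∧ E ω = e ∧ V ω = 1})
    -- (C-k) consistency in mean for arm k among concurrent units
    (hCk : ∀ (w : 𝓦) (e : ℰ), 0 < P {ω | A ω = k ∧ W ω = w ∧ E ω = e ∧ V ω = 1} →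
      condMean P Yk {ω | A ω = k ∧ W ω = w ∧ E ω = e ∧ V ω = 1} =
        condMean P Y {ω | A ω = k ∧ W ω = w ∧ E ω = e ∧ V ω = 1})
    -- (P-k) positivity for arm k among concurrent units
    (hPk : ∀ (w : 𝓦) (e : ℰ), 0 < P {ω | W ω = w ∧ E ω = e ∧ V ω = 1} →
      0 < P {ω | A ω = k ∧ W ω = w ∧ E ω = e ∧ V ω = 1}) :
    condMean P Yk {ω | V ω = 1} =
      ∑ w : 𝓦, ∑ e : ℰ,
        if 0 < P {ω | W ω = w ∧ E ω = e ∧ V ω = 1} then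
          condMean P Y {ω | A ω = k ∧ W ω = w ∧ E ω = e ∧ V ω = 1} *
            ((P {ω | W ω = w ∧ E ω = e ∧ V ω = 1}).toReal / (P {ω | V ω = 1}).toReal)
        else 0 := by
  have hconcurrent : MeasurableSet {ω | V ω = 1} := hV (measurableSet_singleton 1)
  rw [condMean_eq_sum_condMean_fiber_mul P (hW.prodMk hE) hconcurrent hYk, Fintype.sum_prod_type]
  simp only [Prod.mk.injEq, Set.mem_ofPred_eq, and_assoc]
  refine Finset.sum_congr rfl fun w _ => Finset.sum_congr rfl fun e _ => ?_
  split_ifs with hpos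
  · have hAk := hPk w e hpos
    rw [hIk w e hAk, hCk w e hAk]
  · rw [nonpos_iff_eq_zero.1 (not_lt.1 hpos), ENNReal.toReal_zero, zero_div, mul_zero]

/-- Identification of the concurrent counterfactual mean under treatment `k` by
only-concurrent outcome regression (treated-arm part of Theorem 1, statement 1):
under weak A-ignorability (I-k), consistency (C-k) and positivity (P-k) among concurrent
units, `𝔼[Yᵏ | V=1] = Σ_{(w,e) : 𝒫(W=w,E=e,V=1)>0} μ_oc(k,w,e) · p(w,e | V=1)`. -/
theorem concurrent_mean_treated_identification_oc
    {Ω : Type*} [MeasurableSpace Ω] (P : Measure Ω) [IsProbabilityMeasure P]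
    {𝓦 ℰ : Type*} [Fintype 𝓦] [Fintype ℰ] [Nonempty 𝓦] [Nonempty ℰ]
    [MeasurableSpace 𝓦] [MeasurableSingletonClass 𝓦]
    [MeasurableSpace ℰ] [MeasurableSingletonClass ℰ]
    (W : Ω → 𝓦) (E : Ω → ℰ) (V : Ω → Fin 2) {K : ℕ} (A : Ω → Fin (K + 1))
    (k : Fin (K + 1)) (Y Yk Y0 : Ω → ℝ)
    (hW : Measurable W) (hE : Measurable E) (hV : Measurable V) (hA : Measurable A)
    (hY : Integrable Y P) (hYk : Integrable Yk P) (hY0 : Integrable Y0 P)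
    (hV1 : 0 < P {ω | V ω = 1})
    -- (I-k) weak A-ignorability for arm k among concurrent units
    (hIk : ∀ (w : 𝓦) (e : ℰ), 0 < P {ω | A ω = k ∧ W ω = w ∧ E ω = e ∧ V ω = 1} →
      condMean P Yk {ω | W ω = w ∧ E ω = e ∧ V ω = 1} =
        condMean P Yk {ω | A ω = k ∧ W ω = w ∧ E ω = e ∧ V ω = 1})
    -- (C-k) consistency in mean for arm k among concurrent units
    (hCk : ∀ (w : 𝓦) (e : ℰ), 0 < P {ω | A ω = k ∧ W ω = w ∧ E ω = e ∧ V ω = 1} →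
      condMean P Yk {ω | A ω = k ∧ W ω = w ∧ E ω = e ∧ V ω = 1} =
        condMean P Y {ω | A ω = k ∧ W ω = w ∧ E ω = e ∧ V ω = 1})
    -- (P-k) positivity for arm k among concurrent units
    (hPk : ∀ (w : 𝓦) (e : ℰ), 0 < P {ω | W ω = w ∧ E ω = e ∧ V ω = 1} →
      0 < P {ω | A ω = k ∧ W ω = w ∧ E ω = e ∧ V ω = 1}) :
    condMean P Yk {ω | V ω = 1} =
      ∑ w : 𝓦, ∑ e : ℰ,
        if 0 < P {ω | W ω = w ∧ E ω = e ∧ V ω = 1} then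
          condMean P Y {ω | A ω = k ∧ W ω = w ∧ E ω = e ∧ V ω = 1} *
            ((P {ω | W ω = w ∧ E ω = e ∧ V ω = 1}).toReal / (P {ω | V ω = 1}).toReal)
        else 0 :=
  concurrent_mean_treated_identification_oc_general P W E V A k Y Yk hW hE hV hYk hIk hCk hPk
end

section
/- Identification of the concurrent counterfactual mean under control by only-concurrent outcome regression (control-arm part of Theorem 1, statement 1): under assumptions (I-0), (C-0) and (P-0), one has 𝔼[Y⁰ | V=1] = Σ_{(w,e): 𝒫(W=w,E=e,V=1)>0} μ_oc(0,w,e) · p(w,e | V=1). -/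
open MeasureTheory Finset

/-!
Splitting the event `V = 1` into the strata `W = w, E = e, V = 1` writes `𝔼[Y⁰ | V = 1]` as the
average of the stratum means `𝔼[Y⁰ | W = w, E = e, V = 1]` weighted by `p(w, e | V = 1)`, null
strata contributing nothing. On a stratum of positive mass, (P-0) makes the control sub-stratum
non-null, so (I-0) and then (C-0) turn its mean into `μ_oc(0, w, e)`.
-/

section condMean

variable {Ω : Type*} [MeasurableSpace Ω] (P : Measure Ω)
variable {ι : Type*} [Fintype ι] [MeasurableSpace ι] [MeasurableSingletonClass ι]

theorem integral_indicator_eq_sum_fibers {f : Ω → ι} (hf : Measurable f) {X : Ω → ℝ}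
    (hX : Integrable X P) {B : Set Ω} (hB : MeasurableSet B) :
    ∫ ω, B.indicator X ω ∂P = ∑ i, ∫ ω, {ω | f ω = i ∧ ω ∈ B}.indicator X ω ∂P := by
  rw [← integral_finsetSum (f := fun i ω => {ω | f ω = i ∧ ω ∈ B}.indicator X ω) _
    fun i _ => hX.indicator ((hf (measurableSet_singleton i)).inter hB)]
  congr 1
  funext ω
  rw [Finset.sum_eq_single (f ω) (fun i _ hi => Set.indicator_of_notMem (fun h => hi h.1.symm) X)
    (fun h => absurd (Finset.mem_univ _) h)]
  by_cases hω : ω ∈ B <;> simp [hω]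

variable [IsFiniteMeasure P]

theorem condMean_mul_measure (X : Ω → ℝ) (B : Set Ω) :
    condMean P X B * (P B).toReal = ∫ ω, B.indicator X ω ∂P := by
  by_cases hB : P B = 0
  · have hnull : B.indicator X =ᵐ[P] 0 := by
      filter_upwards [measure_eq_zero_iff_ae_notMem.mp hB] with ω hω
      exact Set.indicator_of_notMem hω X
    rw [integral_congr_ae hnull, hB]
    simp
  · have hpos : (P B).toReal ≠ 0 := ENNReal.toReal_ne_zero.mpr ⟨hB, measure_ne_top P B⟩
    rw [condMean, div_mul_cancel₀ _ hpos]

theorem condMean_eq_sum_fibers {f : Ω → ι} (hf : Measurable f) {X : Ω → ℝ}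
    (hX : Integrable X P) {B : Set Ω} (hB : MeasurableSet B) :
    condMean P X B = ∑ i, condMean P X {ω | f ω = i ∧ ω ∈ B} *
      ((P {ω | f ω = i ∧ ω ∈ B}).toReal / (P B).toReal) := by
  rw [condMean, integral_indicator_eq_sum_fibers P hf hX hB, Finset.sum_div]
  refine Finset.sum_congr rfl fun i _ => ?_
  rw [← condMean_mul_measure, mul_div_assoc]

end condMean

theorem concurrent_mean_control_identification_oc_general
    {Ω : Type*} [MeasurableSpace Ω] (P : Measure Ω) [IsProbabilityMeasure P]
    {𝓦 ℰ : Type*} [Fintype 𝓦] [Fintype ℰ]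
    [MeasurableSpace 𝓦] [MeasurableSingletonClass 𝓦]
    [MeasurableSpace ℰ] [MeasurableSingletonClass ℰ]
    (W : Ω → 𝓦) (E : Ω → ℰ) (V : Ω → Fin 2) {K : ℕ} (A : Ω → Fin (K + 1))
    (Y Y0 : Ω → ℝ)
    (hW : Measurable W) (hE : Measurable E) (hV : Measurable V)
    (hY0 : Integrable Y0 P)
    -- (I-0) weak A-ignorability for arm 0
    (hI0 : ∀ (w : 𝓦) (e : ℰ), 0 < P {ω | A ω = 0 ∧ W ω = w ∧ E ω = e ∧ V ω = 1} →
      condMean P Y0 {ω | W ω = w ∧ E ω = e ∧ V ω = 1} =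
        condMean P Y0 {ω | A ω = 0 ∧ W ω = w ∧ E ω = e ∧ V ω = 1})
    -- (C-0) consistency in mean for arm 0
    (hC0 : ∀ (w : 𝓦) (e : ℰ), 0 < P {ω | A ω = 0 ∧ W ω = w ∧ E ω = e ∧ V ω = 1} →
      condMean P Y0 {ω | A ω = 0 ∧ W ω = w ∧ E ω = e ∧ V ω = 1} =
        condMean P Y {ω | A ω = 0 ∧ W ω = w ∧ E ω = e ∧ V ω = 1})
    -- (P-0) positivity for arm 0
    (hP0 : ∀ (w : 𝓦) (e : ℰ), 0 < P {ω | W ω = w ∧ E ω = e ∧ V ω = 1} →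
      0 < P {ω | A ω = 0 ∧ W ω = w ∧ E ω = e ∧ V ω = 1})
    :
    condMean P Y0 {ω | V ω = 1} =
      ∑ w : 𝓦, ∑ e : ℰ,
        if 0 < P {ω | W ω = w ∧ E ω = e ∧ V ω = 1} then
          condMean P Y {ω | A ω = 0 ∧ W ω = w ∧ E ω = e ∧ V ω = 1} *
            ((P {ω | W ω = w ∧ E ω = e ∧ V ω = 1}).toReal / (P {ω | V ω = 1}).toReal)
        else 0 := by
  rw [condMean_eq_sum_fibers P (hW.prodMk hE) hY0 (B := {ω | V ω = 1})
      (hV (measurableSet_singleton 1)), Fintype.sum_prod_type]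
  simp only [Prod.mk.injEq, Set.mem_ofPred_eq, and_assoc]
  refine Finset.sum_congr rfl fun w _ => Finset.sum_congr rfl fun e _ => ?_
  split_ifs with hS
  · have hA0 := hP0 w e hS
    rw [hI0 w e hA0, hC0 w e hA0]
  · simp [nonpos_iff_eq_zero.mp (not_lt.mp hS)]

/-- Identification of the concurrent counterfactual mean under control by only-concurrent
outcome regression (control-arm part of Theorem 1, statement 1): under (I-0), (C-0), (P-0),
`𝔼[Y⁰ | V=1] = Σ_{(w,e) : 𝒫(W=w,E=e,V=1)>0} μ_oc(0,w,e) · p(w,e | V=1)`. -/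
theorem concurrent_mean_control_identification_oc
    {Ω : Type*} [MeasurableSpace Ω] (P : Measure Ω) [IsProbabilityMeasure P]
    {𝓦 ℰ : Type*} [Fintype 𝓦] [Fintype ℰ] [Nonempty 𝓦] [Nonempty ℰ]
    [MeasurableSpace 𝓦] [MeasurableSingletonClass 𝓦]
    [MeasurableSpace ℰ] [MeasurableSingletonClass ℰ]
    (W : Ω → 𝓦) (E : Ω → ℰ) (V : Ω → Fin 2) {K : ℕ} (A : Ω → Fin (K + 1))
    (k : Fin (K + 1)) (Y Yk Y0 : Ω → ℝ)
    (hW : Measurable W) (hE : Measurable E) (hV : Measurable V) (hA : Measurable A)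
    (hY : Integrable Y P) (hYk : Integrable Yk P) (hY0 : Integrable Y0 P)
    (hV1 : 0 < P {ω | V ω = 1})
    -- (I-0) weak A-ignorability for arm 0
    (hI0 : ∀ (w : 𝓦) (e : ℰ), 0 < P {ω | A ω = 0 ∧ W ω = w ∧ E ω = e ∧ V ω = 1} →
      condMean P Y0 {ω | W ω = w ∧ E ω = e ∧ V ω = 1} =
        condMean P Y0 {ω | A ω = 0 ∧ W ω = w ∧ E ω = e ∧ V ω = 1})
    -- (C-0) consistency in mean for arm 0
    (hC0 : ∀ (w : 𝓦) (e : ℰ), 0 < P {ω | A ω = 0 ∧ W ω = w ∧ E ω = e ∧ V ω = 1} →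
      condMean P Y0 {ω | A ω = 0 ∧ W ω = w ∧ E ω = e ∧ V ω = 1} =
        condMean P Y {ω | A ω = 0 ∧ W ω = w ∧ E ω = e ∧ V ω = 1})
    -- (P-0) positivity for arm 0
    (hP0 : ∀ (w : 𝓦) (e : ℰ), 0 < P {ω | W ω = w ∧ E ω = e ∧ V ω = 1} →
      0 < P {ω | A ω = 0 ∧ W ω = w ∧ E ω = e ∧ V ω = 1})
    :
    condMean P Y0 {ω | V ω = 1} =
      ∑ w : 𝓦, ∑ e : ℰ,
        if 0 < P {ω | W ω = w ∧ E ω = e ∧ V ω = 1} then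
          condMean P Y {ω | A ω = 0 ∧ W ω = w ∧ E ω = e ∧ V ω = 1} *
            ((P {ω | W ω = w ∧ E ω = e ∧ V ω = 1}).toReal / (P {ω | V ω = 1}).toReal)
        else 0 :=
  concurrent_mean_control_identification_oc_general P W E V A Y Y0 hW hE hV hY0 hI0 hC0 hP0
end

section
/- Theorem 1, statement 1 (identification of the concurrent average treatment effect by only-concurrent regressions): under assumptions (I-k), (C-k), (P-k), (I-0), (C-0) and (P-0), the concurrent average treatment effect cATE(k) := 𝔼[Yᵏ − Y⁰ | V=1] satisfies cATE(k) = Σ_{(w,e): 𝒫(W=w,E=e,V=1)>0} (μ_oc(k,w,e) − μ_oc(0,w,e)) · p(w,e | V=1). -/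
open MeasureTheory Finset

section Helpers

variable {Ω : Type*} [MeasurableSpace Ω] (P : Measure Ω) [IsProbabilityMeasure P]

lemma indicator_decomp {𝓦 ℰ : Type*} [Fintype 𝓦] [Fintype ℰ]
    (W : Ω → 𝓦) (E : Ω → ℰ) (V : Ω → Fin 2) (X : Ω → ℝ) (ω : Ω) :
    ({ω | V ω = 1} : Set Ω).indicator X ω =
      ∑ w : 𝓦, ∑ e : ℰ, ({ω | W ω = w ∧ E ω = e ∧ V ω = 1} : Set Ω).indicator X ω := by
  by_cases hv : V ω = 1
  · rw [Set.indicator_of_mem (show ω ∈ ({ω | V ω = 1} : Set Ω) from hv)]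
    rw [Finset.sum_eq_single (W ω)]
    · rw [Finset.sum_eq_single (E ω)]
      · exact (Set.indicator_of_mem (show ω ∈ {ω' | W ω' = W ω ∧ E ω' = E ω ∧ V ω' = 1} from ⟨rfl, rfl, hv⟩) X).symm
      · intro e _ he
        exact Set.indicator_of_notMem (show ω ∉ {ω' | W ω' = W ω ∧ E ω' = e ∧ V ω' = 1} from fun h => he h.2.1.symm) X
      · intro h; exact absurd (Finset.mem_univ _) h
    · intro w _ hw
      rw [Finset.sum_eq_zero]
      intro e _
      exact Set.indicator_of_notMem (show ω ∉ {ω' | W ω' = w ∧ E ω' = e ∧ V ω' = 1} from fun h => hw h.1.symm) X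
    · intro h; exact absurd (Finset.mem_univ _) h
  · rw [Set.indicator_of_notMem (show ω ∉ ({ω | V ω = 1} : Set Ω) from hv)]
    symm
    apply Finset.sum_eq_zero; intro w _
    apply Finset.sum_eq_zero; intro e _
    exact Set.indicator_of_notMem (show ω ∉ {ω' | W ω' = w ∧ E ω' = e ∧ V ω' = 1} from fun h => hv h.2.2) X

lemma measSet_we {𝓦 ℰ : Type*} [MeasurableSpace 𝓦] [MeasurableSingletonClass 𝓦]
    [MeasurableSpace ℰ] [MeasurableSingletonClass ℰ]
    {W : Ω → 𝓦} {E : Ω → ℰ} {V : Ω → Fin 2}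
    (hW : Measurable W) (hE : Measurable E) (hV : Measurable V) (w : 𝓦) (e : ℰ) :
    MeasurableSet ({ω | W ω = w ∧ E ω = e ∧ V ω = 1} : Set Ω) := by
  have : ({ω | W ω = w ∧ E ω = e ∧ V ω = 1} : Set Ω)
      = W ⁻¹' {w} ∩ (E ⁻¹' {e} ∩ V ⁻¹' {1}) := by
    ext ω; simp [Set.mem_preimage]
  rw [this]
  exact (hW (measurableSet_singleton w)).inter
    ((hE (measurableSet_singleton e)).inter (hV (measurableSet_singleton 1)))

/-- Law of total expectation decomposition of condMean over V=1. -/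
lemma condMean_total {𝓦 ℰ : Type*} [Fintype 𝓦] [Fintype ℰ]
    [MeasurableSpace 𝓦] [MeasurableSingletonClass 𝓦]
    [MeasurableSpace ℰ] [MeasurableSingletonClass ℰ]
    {W : Ω → 𝓦} {E : Ω → ℰ} {V : Ω → Fin 2}
    (hW : Measurable W) (hE : Measurable E) (hV : Measurable V)
    (X : Ω → ℝ) (hX : Integrable X P) :
    condMean P X {ω | V ω = 1} =
      ∑ w : 𝓦, ∑ e : ℰ,
        if 0 < P {ω | W ω = w ∧ E ω = e ∧ V ω = 1} then
          condMean P X {ω | W ω = w ∧ E ω = e ∧ V ω = 1} *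
            ((P {ω | W ω = w ∧ E ω = e ∧ V ω = 1}).toReal / (P {ω | V ω = 1}).toReal)
        else 0 := by
  have hint : ∀ (w : 𝓦) (e : ℰ),
      Integrable (({ω | W ω = w ∧ E ω = e ∧ V ω = 1} : Set Ω).indicator X) P := by
    intro w e
    exact hX.indicator (measSet_we hW hE hV w e)
  have h1 : (∫ ω, ({ω | V ω = 1} : Set Ω).indicator X ω ∂P) =
      ∑ w : 𝓦, ∑ e : ℰ, ∫ ω, ({ω | W ω = w ∧ E ω = e ∧ V ω = 1} : Set Ω).indicator X ω ∂P := by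
    have : (∫ ω, ({ω | V ω = 1} : Set Ω).indicator X ω ∂P) =
        ∫ ω, ∑ w : 𝓦, ∑ e : ℰ, ({ω | W ω = w ∧ E ω = e ∧ V ω = 1} : Set Ω).indicator X ω ∂P := by
      congr 1; ext ω; exact indicator_decomp W E V X ω
    rw [this, integral_finset_sum]
    · refine Finset.sum_congr rfl fun w _ => ?_
      rw [integral_finset_sum]
      intro e _; exact hint w e
    · intro w _; exact (integrable_finset_sum _ fun e _ => hint w e)
  unfold condMean
  rw [h1, Finset.sum_div]
  refine Finset.sum_congr rfl fun w _ => ?_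
  rw [Finset.sum_div]
  refine Finset.sum_congr rfl fun e _ => ?_
  by_cases hp : 0 < P {ω | W ω = w ∧ E ω = e ∧ V ω = 1}
  · rw [if_pos hp]
    have hne : (P {ω | W ω = w ∧ E ω = e ∧ V ω = 1}).toReal ≠ 0 := by
      refine ENNReal.toReal_ne_zero.mpr ⟨hp.ne', measure_ne_top P _⟩
    field_simp
  · rw [if_neg hp]
    have h0 : P {ω | W ω = w ∧ E ω = e ∧ V ω = 1} = 0 := by
      by_contra h; exact hp (pos_iff_ne_zero.mpr h)
    rw [integral_indicator (measSet_we hW hE hV w e), Measure.restrict_eq_zero.mpr h0, integral_zero_measure, zero_div]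

end Helpers

/-- Theorem 1, statement 1: identification of the concurrent average treatment effect
`cATE(k) := 𝔼[Yᵏ − Y⁰ | V=1]` by only-concurrent regressions, under (I-k), (C-k), (P-k),
(I-0), (C-0) and (P-0). -/
theorem cATE_identification_oc
    {Ω : Type*} [MeasurableSpace Ω] (P : Measure Ω) [IsProbabilityMeasure P]
    {𝓦 ℰ : Type*} [Fintype 𝓦] [Fintype ℰ] [Nonempty 𝓦] [Nonempty ℰ]
    [MeasurableSpace 𝓦] [MeasurableSingletonClass 𝓦]
    [MeasurableSpace ℰ] [MeasurableSingletonClass ℰ]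
    (W : Ω → 𝓦) (E : Ω → ℰ) (V : Ω → Fin 2) {K : ℕ} (A : Ω → Fin (K + 1))
    (k : Fin (K + 1)) (Y Yk Y0 : Ω → ℝ)
    (hW : Measurable W) (hE : Measurable E) (hV : Measurable V) (hA : Measurable A)
    (hY : Integrable Y P) (hYk : Integrable Yk P) (hY0 : Integrable Y0 P)
    (hV1 : 0 < P {ω | V ω = 1})
    -- (I-k) weak A-ignorability for arm k
    (hIk : ∀ (w : 𝓦) (e : ℰ), 0 < P {ω | A ω = k ∧ W ω = w ∧ E ω = e ∧ V ω = 1} →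
      condMean P Yk {ω | W ω = w ∧ E ω = e ∧ V ω = 1} =
        condMean P Yk {ω | A ω = k ∧ W ω = w ∧ E ω = e ∧ V ω = 1})
    -- (C-k) consistency in mean for arm k
    (hCk : ∀ (w : 𝓦) (e : ℰ), 0 < P {ω | A ω = k ∧ W ω = w ∧ E ω = e ∧ V ω = 1} →
      condMean P Yk {ω | A ω = k ∧ W ω = w ∧ E ω = e ∧ V ω = 1} =
        condMean P Y {ω | A ω = k ∧ W ω = w ∧ E ω = e ∧ V ω = 1})
    -- (P-k) positivity for arm k
    (hPk : ∀ (w : 𝓦) (e : ℰ), 0 < P {ω | W ω = w ∧ E ω = e ∧ V ω = 1} →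
      0 < P {ω | A ω = k ∧ W ω = w ∧ E ω = e ∧ V ω = 1})
    -- (I-0) weak A-ignorability for arm 0
    (hI0 : ∀ (w : 𝓦) (e : ℰ), 0 < P {ω | A ω = 0 ∧ W ω = w ∧ E ω = e ∧ V ω = 1} →
      condMean P Y0 {ω | W ω = w ∧ E ω = e ∧ V ω = 1} =
        condMean P Y0 {ω | A ω = 0 ∧ W ω = w ∧ E ω = e ∧ V ω = 1})
    -- (C-0) consistency in mean for arm 0
    (hC0 : ∀ (w : 𝓦) (e : ℰ), 0 < P {ω | A ω = 0 ∧ W ω = w ∧ E ω = e ∧ V ω = 1} →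
      condMean P Y0 {ω | A ω = 0 ∧ W ω = w ∧ E ω = e ∧ V ω = 1} =
        condMean P Y {ω | A ω = 0 ∧ W ω = w ∧ E ω = e ∧ V ω = 1})
    -- (P-0) positivity for arm 0
    (hP0 : ∀ (w : 𝓦) (e : ℰ), 0 < P {ω | W ω = w ∧ E ω = e ∧ V ω = 1} →
      0 < P {ω | A ω = 0 ∧ W ω = w ∧ E ω = e ∧ V ω = 1})
    :
    condMean P (fun ω => Yk ω - Y0 ω) {ω | V ω = 1} =
      ∑ w : 𝓦, ∑ e : ℰ,
        if 0 < P {ω | W ω = w ∧ E ω = e ∧ V ω = 1} then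
          (condMean P Y {ω | A ω = k ∧ W ω = w ∧ E ω = e ∧ V ω = 1} -
               condMean P Y {ω | A ω = 0 ∧ W ω = w ∧ E ω = e ∧ V ω = 1}) *
            ((P {ω | W ω = w ∧ E ω = e ∧ V ω = 1}).toReal / (P {ω | V ω = 1}).toReal)
        else 0 := by
  have hVs : MeasurableSet ({ω | V ω = 1} : Set Ω) := hV (measurableSet_singleton 1)
  have hsub : condMean P (fun ω => Yk ω - Y0 ω) {ω | V ω = 1}
      = condMean P Yk {ω | V ω = 1} - condMean P Y0 {ω | V ω = 1} := by
    unfold condMean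
    rw [← sub_div]
    congr 1
    have h2 : ∀ ω, ({ω | V ω = 1} : Set Ω).indicator (fun ω => Yk ω - Y0 ω) ω
        = ({ω | V ω = 1} : Set Ω).indicator Yk ω - ({ω | V ω = 1} : Set Ω).indicator Y0 ω := by
      intro ω; by_cases h : ω ∈ ({ω | V ω = 1} : Set Ω) <;> simp [Set.indicator_apply, h]
    simp_rw [h2]
    exact integral_sub (hYk.indicator hVs) (hY0.indicator hVs)
  rw [hsub, condMean_total P hW hE hV Yk hYk, condMean_total P hW hE hV Y0 hY0,
    ← Finset.sum_sub_distrib]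
  refine Finset.sum_congr rfl fun w _ => ?_
  rw [← Finset.sum_sub_distrib]
  refine Finset.sum_congr rfl fun e _ => ?_
  by_cases hp : 0 < P {ω | W ω = w ∧ E ω = e ∧ V ω = 1}
  · rw [if_pos hp, if_pos hp, if_pos hp,
      hIk w e (hPk w e hp), hCk w e (hPk w e hp),
      hI0 w e (hP0 w e hp), hC0 w e (hP0 w e hp), sub_mul]
  · simp [hp]
end

section
/- Identification of the concurrent counterfactual mean under control by the pooled (concurrent plus non-concurrent) control regression (control-arm part of Theorem 1, statement 2): under assumptions (I-0), (C-0), (P-0) and (Pool), one has 𝔼[Y⁰ | V=1] = Σ_{(w,e): 𝒫(W=w,E=e,V=1)>0} μ_all(0,w,e) · p(w,e | V=1). -/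
open MeasureTheory Finset

lemma condMean_mul_meas {Ω : Type*} [MeasurableSpace Ω] (P : Measure Ω) [IsFiniteMeasure P]
    (X : Ω → ℝ) (B : Set Ω) (hB : 0 < P B) :
    condMean P X B * (P B).toReal = ∫ ω, B.indicator X ω ∂P := by
  have h : (P B).toReal ≠ 0 :=
    (ENNReal.toReal_pos hB.ne' (measure_ne_top P B)).ne'
  unfold condMean
  field_simp

/-- Identification of the concurrent counterfactual mean under control by the pooled
(concurrent plus non-concurrent) control regression (control-arm part of Theorem 1,
statement 2): under (I-0), (C-0), (P-0) and (Pool),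
`𝔼[Y⁰ | V=1] = Σ_{(w,e) : 𝒫(W=w,E=e,V=1)>0} μ_all(0,w,e) · p(w,e | V=1)`. -/
theorem concurrent_mean_control_identification_all
    {Ω : Type*} [MeasurableSpace Ω] (P : Measure Ω) [IsProbabilityMeasure P]
    {𝓦 ℰ : Type*} [Fintype 𝓦] [Fintype ℰ] [Nonempty 𝓦] [Nonempty ℰ]
    [MeasurableSpace 𝓦] [MeasurableSingletonClass 𝓦]
    [MeasurableSpace ℰ] [MeasurableSingletonClass ℰ]
    (W : Ω → 𝓦) (E : Ω → ℰ) (V : Ω → Fin 2) {K : ℕ} (A : Ω → Fin (K + 1))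
    (k : Fin (K + 1)) (Y Yk Y0 : Ω → ℝ)
    (hW : Measurable W) (hE : Measurable E) (hV : Measurable V) (hA : Measurable A)
    (hY : Integrable Y P) (hYk : Integrable Yk P) (hY0 : Integrable Y0 P)
    (hV1 : 0 < P {ω | V ω = 1})
    -- (I-0) weak A-ignorability for arm 0
    (hI0 : ∀ (w : 𝓦) (e : ℰ), 0 < P {ω | A ω = 0 ∧ W ω = w ∧ E ω = e ∧ V ω = 1} →
      condMean P Y0 {ω | W ω = w ∧ E ω = e ∧ V ω = 1} =
        condMean P Y0 {ω | A ω = 0 ∧ W ω = w ∧ E ω = e ∧ V ω = 1})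
    -- (C-0) consistency in mean for arm 0
    (hC0 : ∀ (w : 𝓦) (e : ℰ), 0 < P {ω | A ω = 0 ∧ W ω = w ∧ E ω = e ∧ V ω = 1} →
      condMean P Y0 {ω | A ω = 0 ∧ W ω = w ∧ E ω = e ∧ V ω = 1} =
        condMean P Y {ω | A ω = 0 ∧ W ω = w ∧ E ω = e ∧ V ω = 1})
    -- (P-0) positivity for arm 0
    (hP0 : ∀ (w : 𝓦) (e : ℰ), 0 < P {ω | W ω = w ∧ E ω = e ∧ V ω = 1} →
      0 < P {ω | A ω = 0 ∧ W ω = w ∧ E ω = e ∧ V ω = 1})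
    -- (Pool) pooling of concurrent and non-concurrent controls
    (hPool : ∀ (w : 𝓦) (e : ℰ), 0 < P {ω | A ω = 0 ∧ W ω = w ∧ E ω = e ∧ V ω = 1} →
      condMean P Y {ω | A ω = 0 ∧ W ω = w ∧ E ω = e ∧ V ω = 1} =
        condMean P Y {ω | A ω = 0 ∧ W ω = w ∧ E ω = e})
    :
    condMean P Y0 {ω | V ω = 1} =
      ∑ w : 𝓦, ∑ e : ℰ,
        if 0 < P {ω | W ω = w ∧ E ω = e ∧ V ω = 1} then
          condMean P Y {ω | A ω = 0 ∧ W ω = w ∧ E ω = e} *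
            ((P {ω | W ω = w ∧ E ω = e ∧ V ω = 1}).toReal / (P {ω | V ω = 1}).toReal)
        else 0 := by
  classical
  set S : 𝓦 → ℰ → Set Ω := fun w e => {ω | W ω = w ∧ E ω = e ∧ V ω = 1} with hS
  have hSm : ∀ w e, MeasurableSet (S w e) := fun w e =>
    (hW (measurableSet_singleton w)).inter
      ((hE (measurableSet_singleton e)).inter (hV (measurableSet_singleton 1)))
  have hpt : ∀ ω, ({ω | V ω = 1} : Set Ω).indicator Y0 ω =
      ∑ w : 𝓦, ∑ e : ℰ, (S w e).indicator Y0 ω := by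
    intro ω
    simp only [Set.indicator_apply, Set.mem_setOf_eq, hS]
    by_cases hv : V ω = 1
    · rw [if_pos hv, Finset.sum_eq_single (W ω), Finset.sum_eq_single (E ω)]
      · simp [hv]
      · intro e _ he
        rw [if_neg]
        rintro ⟨-, h, -⟩
        exact he h.symm
      · simp
      · intro w _ hw
        apply Finset.sum_eq_zero
        intro e _
        rw [if_neg]
        rintro ⟨h, -, -⟩
        exact hw h.symm
      · simp
    · simp [hv]
  have hint : ∀ w e, Integrable ((S w e).indicator Y0) P := fun w e =>
    hY0.indicator (hSm w e)
  have hsplit : ∫ ω, ({ω | V ω = 1} : Set Ω).indicator Y0 ω ∂P =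
      ∑ w : 𝓦, ∑ e : ℰ, ∫ ω, (S w e).indicator Y0 ω ∂P := by
    rw [show (fun ω => ({ω | V ω = 1} : Set Ω).indicator Y0 ω) =
        fun ω => ∑ w : 𝓦, ∑ e : ℰ, (S w e).indicator Y0 ω from funext hpt]
    rw [integral_finset_sum _ fun w _ => integrable_finset_sum _ fun e _ => hint w e]
    exact Finset.sum_congr rfl fun w _ => integral_finset_sum _ fun e _ => hint w e
  have hterm : ∀ w e, ∫ ω, (S w e).indicator Y0 ω ∂P =
      if 0 < P (S w e) then
        condMean P Y {ω | A ω = 0 ∧ W ω = w ∧ E ω = e} * (P (S w e)).toReal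
      else 0 := by
    intro w e
    by_cases hp : 0 < P (S w e)
    · rw [if_pos hp, ← condMean_mul_meas P Y0 (S w e) hp]
      congr 1
      have h0 := hP0 w e hp
      exact (hI0 w e h0).trans ((hC0 w e h0).trans (hPool w e h0))
    · rw [if_neg hp]
      have hz : P (S w e) = 0 := by simpa using hp
      have : (S w e).indicator Y0 =ᵐ[P] 0 := by
        filter_upwards [measure_eq_zero_iff_ae_notMem.mp hz] with ω hω
        simp [Set.indicator_of_notMem hω]
      rw [integral_congr_ae this]
      simp
  conv_lhs => rw [condMean]
  rw [hsplit]
  rw [Finset.sum_div]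
  refine Finset.sum_congr rfl fun w _ => ?_
  rw [Finset.sum_div]
  refine Finset.sum_congr rfl fun e _ => ?_
  rw [hterm w e]
  by_cases hp : 0 < P (S w e)
  · rw [if_pos hp, if_pos hp, mul_div_assoc]
  · rw [if_neg hp, if_neg hp, zero_div]
end

section
/- Theorem 1, statement 2 (identification of the concurrent average treatment effect using all controls): under assumptions (I-k), (C-k), (P-k), (I-0), (C-0), (P-0) and (Pool), the concurrent average treatment effect cATE(k) := 𝔼[Yᵏ − Y⁰ | V=1] satisfies cATE(k) = Σ_{(w,e): 𝒫(W=w,E=e,V=1)>0} (μ_oc(k,w,e) − μ_all(0,w,e)) · p(w,e | V=1). -/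
open MeasureTheory Finset

section condMean

variable {Ω : Type*} [MeasurableSpace Ω] (P : Measure Ω)

lemma condMean_sub {X Z : Ω → ℝ} (hX : Integrable X P) (hZ : Integrable Z P)
    {B : Set Ω} (hB : MeasurableSet B) :
    condMean P (fun ω => X ω - Z ω) B = condMean P X B - condMean P Z B := by
  rw [condMean, Set.indicator_sub, integral_sub (hX.indicator hB) (hZ.indicator hB), sub_div,
    condMean, condMean]

lemma integral_indicator_eq_condMean_mul [IsFiniteMeasure P] (X : Ω → ℝ)
    {B : Set Ω} (hB : MeasurableSet B) :
    ∫ ω, B.indicator X ω ∂P = condMean P X B * (P B).toReal := by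
  rcases eq_or_ne (P B) 0 with hB0 | hB0
  · simp [hB0, integral_indicator hB, Measure.restrict_eq_zero.2 hB0]
  · exact (div_mul_cancel₀ _ (ENNReal.toReal_ne_zero.2 ⟨hB0, measure_ne_top P B⟩)).symm

open Function in
lemma condMean_iUnion_eq_sum [IsFiniteMeasure P] {ι : Type*} [Fintype ι] {X : Ω → ℝ}
    (hX : Integrable X P) {S : ι → Set Ω} (hS : ∀ i, MeasurableSet (S i))
    (hdisj : Pairwise (Disjoint on S)) :
    condMean P X (⋃ i, S i) =
      ∑ i, condMean P X (S i) * ((P (S i)).toReal / (P (⋃ i, S i)).toReal) := by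
  simp only [← mul_div_assoc, ← Finset.sum_div, ← integral_indicator_eq_condMean_mul P X (hS _)]
  rw [condMean, integral_indicator (MeasurableSet.iUnion hS),
    integral_iUnion_fintype hS hdisj fun _ => hX.integrableOn]
  simp only [integral_indicator (hS _)]

end condMean

open Function in
lemma condMean_eq_sum_strata {Ω : Type*} [MeasurableSpace Ω] (P : Measure Ω)
    [IsFiniteMeasure P] {𝓦 ℰ β : Type*} [Fintype 𝓦] [Fintype ℰ]
    [MeasurableSpace 𝓦] [MeasurableSingletonClass 𝓦]
    [MeasurableSpace ℰ] [MeasurableSingletonClass ℰ]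
    [MeasurableSpace β] [MeasurableSingletonClass β]
    {W : Ω → 𝓦} {E : Ω → ℰ} {V : Ω → β} (hW : Measurable W) (hE : Measurable E)
    (hV : Measurable V) (v : β) {X : Ω → ℝ} (hX : Integrable X P) :
    condMean P X {ω | V ω = v} =
      ∑ w : 𝓦, ∑ e : ℰ,
        condMean P X {ω | W ω = w ∧ E ω = e ∧ V ω = v} *
          ((P {ω | W ω = w ∧ E ω = e ∧ V ω = v}).toReal / (P {ω | V ω = v}).toReal) := by
  set S : 𝓦 × ℰ → Set Ω := fun p => {ω | W ω = p.1 ∧ E ω = p.2 ∧ V ω = v}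
  have hcover : {ω | V ω = v} = ⋃ p, S p := by
    ext ω
    simp [S]
  have hS : ∀ p, MeasurableSet (S p) := fun p =>
    (hW (measurableSet_singleton p.1)).inter
      ((hE (measurableSet_singleton p.2)).inter (hV (measurableSet_singleton v)))
  have hdisj : Pairwise (Disjoint on S) := fun p q hne => Set.disjoint_left.2 fun _ hp hq =>
    hne (Prod.ext (hp.1.symm.trans hq.1) (hp.2.1.symm.trans hq.2.1))
  rw [hcover, condMean_iUnion_eq_sum P hX hS hdisj, Fintype.sum_prod_type]

theorem cATE_identification_all_general
    {Ω : Type*} [MeasurableSpace Ω] (P : Measure Ω) [IsProbabilityMeasure P]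
    {𝓦 ℰ : Type*} [Fintype 𝓦] [Fintype ℰ]
    [MeasurableSpace 𝓦] [MeasurableSingletonClass 𝓦]
    [MeasurableSpace ℰ] [MeasurableSingletonClass ℰ]
    (W : Ω → 𝓦) (E : Ω → ℰ) (V : Ω → Fin 2) {K : ℕ} (A : Ω → Fin (K + 1))
    (k : Fin (K + 1)) (Y Yk Y0 : Ω → ℝ)
    (hW : Measurable W) (hE : Measurable E) (hV : Measurable V)
    (hYk : Integrable Yk P) (hY0 : Integrable Y0 P)
    -- (I-k) weak A-ignorability for arm k
    (hIk : ∀ (w : 𝓦) (e : ℰ), 0 < P {ω | A ω = k ∧ W ω = w ∧ E ω = e ∧ V ω = 1} →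
      condMean P Yk {ω | W ω = w ∧ E ω = e ∧ V ω = 1} =
        condMean P Yk {ω | A ω = k ∧ W ω = w ∧ E ω = e ∧ V ω = 1})
    -- (C-k) consistency in mean for arm k
    (hCk : ∀ (w : 𝓦) (e : ℰ), 0 < P {ω | A ω = k ∧ W ω = w ∧ E ω = e ∧ V ω = 1} →
      condMean P Yk {ω | A ω = k ∧ W ω = w ∧ E ω = e ∧ V ω = 1} =
        condMean P Y {ω | A ω = k ∧ W ω = w ∧ E ω = e ∧ V ω = 1})
    -- (P-k) positivity for arm k
    (hPk : ∀ (w : 𝓦) (e : ℰ), 0 < P {ω | W ω = w ∧ E ω = e ∧ V ω = 1} →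
      0 < P {ω | A ω = k ∧ W ω = w ∧ E ω = e ∧ V ω = 1})
    -- (I-0) weak A-ignorability for arm 0
    (hI0 : ∀ (w : 𝓦) (e : ℰ), 0 < P {ω | A ω = 0 ∧ W ω = w ∧ E ω = e ∧ V ω = 1} →
      condMean P Y0 {ω | W ω = w ∧ E ω = e ∧ V ω = 1} =
        condMean P Y0 {ω | A ω = 0 ∧ W ω = w ∧ E ω = e ∧ V ω = 1})
    -- (C-0) consistency in mean for arm 0
    (hC0 : ∀ (w : 𝓦) (e : ℰ), 0 < P {ω | A ω = 0 ∧ W ω = w ∧ E ω = e ∧ V ω = 1} →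
      condMean P Y0 {ω | A ω = 0 ∧ W ω = w ∧ E ω = e ∧ V ω = 1} =
        condMean P Y {ω | A ω = 0 ∧ W ω = w ∧ E ω = e ∧ V ω = 1})
    -- (P-0) positivity for arm 0
    (hP0 : ∀ (w : 𝓦) (e : ℰ), 0 < P {ω | W ω = w ∧ E ω = e ∧ V ω = 1} →
      0 < P {ω | A ω = 0 ∧ W ω = w ∧ E ω = e ∧ V ω = 1})
    -- (Pool) pooling of concurrent and non-concurrent controls
    (hPool : ∀ (w : 𝓦) (e : ℰ), 0 < P {ω | A ω = 0 ∧ W ω = w ∧ E ω = e ∧ V ω = 1} →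
      condMean P Y {ω | A ω = 0 ∧ W ω = w ∧ E ω = e ∧ V ω = 1} =
        condMean P Y {ω | A ω = 0 ∧ W ω = w ∧ E ω = e})
    :
    condMean P (fun ω => Yk ω - Y0 ω) {ω | V ω = 1} =
      ∑ w : 𝓦, ∑ e : ℰ,
        if 0 < P {ω | W ω = w ∧ E ω = e ∧ V ω = 1} then
          (condMean P Y {ω | A ω = k ∧ W ω = w ∧ E ω = e ∧ V ω = 1} -
               condMean P Y {ω | A ω = 0 ∧ W ω = w ∧ E ω = e}) *
            ((P {ω | W ω = w ∧ E ω = e ∧ V ω = 1}).toReal / (P {ω | V ω = 1}).toReal)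
        else 0 := by
  have hVmeas : MeasurableSet {ω | V ω = 1} := hV (measurableSet_singleton 1)
  rw [condMean_sub P hYk hY0 hVmeas, condMean_eq_sum_strata P hW hE hV 1 hYk,
    condMean_eq_sum_strata P hW hE hV 1 hY0, ← Finset.sum_sub_distrib]
  refine Finset.sum_congr rfl fun w _ => ?_
  rw [← Finset.sum_sub_distrib]
  refine Finset.sum_congr rfl fun e _ => ?_
  split_ifs with hpos
  · have hk := hPk w e hpos
    have h0 := hP0 w e hpos
    rw [hIk w e hk, hCk w e hk, hI0 w e h0, hC0 w e h0, hPool w e h0, ← sub_mul]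
  · simp [nonpos_iff_eq_zero.1 (not_lt.1 hpos)]

/-- Theorem 1, statement 2: identification of the concurrent average treatment effect
`cATE(k) := 𝔼[Yᵏ − Y⁰ | V=1]` using all (concurrent and non-concurrent) controls, under
(I-k), (C-k), (P-k), (I-0), (C-0), (P-0) and (Pool). -/
theorem cATE_identification_all
    {Ω : Type*} [MeasurableSpace Ω] (P : Measure Ω) [IsProbabilityMeasure P]
    {𝓦 ℰ : Type*} [Fintype 𝓦] [Fintype ℰ] [Nonempty 𝓦] [Nonempty ℰ]
    [MeasurableSpace 𝓦] [MeasurableSingletonClass 𝓦]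
    [MeasurableSpace ℰ] [MeasurableSingletonClass ℰ]
    (W : Ω → 𝓦) (E : Ω → ℰ) (V : Ω → Fin 2) {K : ℕ} (A : Ω → Fin (K + 1))
    (k : Fin (K + 1)) (Y Yk Y0 : Ω → ℝ)
    (hW : Measurable W) (hE : Measurable E) (hV : Measurable V) (hA : Measurable A)
    (hY : Integrable Y P) (hYk : Integrable Yk P) (hY0 : Integrable Y0 P)
    (hV1 : 0 < P {ω | V ω = 1})
    -- (I-k) weak A-ignorability for arm k
    (hIk : ∀ (w : 𝓦) (e : ℰ), 0 < P {ω | A ω = k ∧ W ω = w ∧ E ω = e ∧ V ω = 1} →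
      condMean P Yk {ω | W ω = w ∧ E ω = e ∧ V ω = 1} =
        condMean P Yk {ω | A ω = k ∧ W ω = w ∧ E ω = e ∧ V ω = 1})
    -- (C-k) consistency in mean for arm k
    (hCk : ∀ (w : 𝓦) (e : ℰ), 0 < P {ω | A ω = k ∧ W ω = w ∧ E ω = e ∧ V ω = 1} →
      condMean P Yk {ω | A ω = k ∧ W ω = w ∧ E ω = e ∧ V ω = 1} =
        condMean P Y {ω | A ω = k ∧ W ω = w ∧ E ω = e ∧ V ω = 1})
    -- (P-k) positivity for arm k
    (hPk : ∀ (w : 𝓦) (e : ℰ), 0 < P {ω | W ω = w ∧ E ω = e ∧ V ω = 1} →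
      0 < P {ω | A ω = k ∧ W ω = w ∧ E ω = e ∧ V ω = 1})
    -- (I-0) weak A-ignorability for arm 0
    (hI0 : ∀ (w : 𝓦) (e : ℰ), 0 < P {ω | A ω = 0 ∧ W ω = w ∧ E ω = e ∧ V ω = 1} →
      condMean P Y0 {ω | W ω = w ∧ E ω = e ∧ V ω = 1} =
        condMean P Y0 {ω | A ω = 0 ∧ W ω = w ∧ E ω = e ∧ V ω = 1})
    -- (C-0) consistency in mean for arm 0
    (hC0 : ∀ (w : 𝓦) (e : ℰ), 0 < P {ω | A ω = 0 ∧ W ω = w ∧ E ω = e ∧ V ω = 1} →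
      condMean P Y0 {ω | A ω = 0 ∧ W ω = w ∧ E ω = e ∧ V ω = 1} =
        condMean P Y {ω | A ω = 0 ∧ W ω = w ∧ E ω = e ∧ V ω = 1})
    -- (P-0) positivity for arm 0
    (hP0 : ∀ (w : 𝓦) (e : ℰ), 0 < P {ω | W ω = w ∧ E ω = e ∧ V ω = 1} →
      0 < P {ω | A ω = 0 ∧ W ω = w ∧ E ω = e ∧ V ω = 1})
    -- (Pool) pooling of concurrent and non-concurrent controls
    (hPool : ∀ (w : 𝓦) (e : ℰ), 0 < P {ω | A ω = 0 ∧ W ω = w ∧ E ω = e ∧ V ω = 1} →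
      condMean P Y {ω | A ω = 0 ∧ W ω = w ∧ E ω = e ∧ V ω = 1} =
        condMean P Y {ω | A ω = 0 ∧ W ω = w ∧ E ω = e})
    :
    condMean P (fun ω => Yk ω - Y0 ω) {ω | V ω = 1} =
      ∑ w : 𝓦, ∑ e : ℰ,
        if 0 < P {ω | W ω = w ∧ E ω = e ∧ V ω = 1} then
          (condMean P Y {ω | A ω = k ∧ W ω = w ∧ E ω = e ∧ V ω = 1} -
               condMean P Y {ω | A ω = 0 ∧ W ω = w ∧ E ω = e}) *
            ((P {ω | W ω = w ∧ E ω = e ∧ V ω = 1}).toReal / (P {ω | V ω = 1}).toReal)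
        else 0 :=
  cATE_identification_all_general P W E V A k Y Yk Y0 hW hE hV hYk hY0 hIk hCk hPk hI0 hC0 hP0 hPool
end

section
/- Deterministic-availability simplification of the treated-arm weighting identification (appendix note): under assumptions (I-k), (C-k), (P-k), (Design) and (Det), one has 𝔼[Yᵏ | V=1] = (1/𝒫(V=1)) · 𝔼[ 1{A=k} · 1{V=1} · Y / π_k(W,E) ], where π_k(w,e) := 𝒫(A=k | W=w, E=e, V=1) and the integrand is defined to be 0 outside the event {A=k, V=1}. -/
open MeasureTheory Finset

/-- Deterministic-availability simplification of the treated-arm weighting identification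
(appendix note): under (I-k), (C-k), (P-k), (Design) and (Det),
`𝔼[Yᵏ | V=1] = (1/𝒫(V=1)) · 𝔼[1{A=k} · 1{V=1} · Y / π_k(W,E)]`, where
`π_k(w,e) := 𝒫(A=k | W=w, E=e, V=1)` and the integrand is `0` outside `{A=k, V=1}`. -/
theorem ipw_identification_treated_deterministic
    {Ω : Type*} [MeasurableSpace Ω] (P : Measure Ω) [IsProbabilityMeasure P]
    {𝓦 ℰ : Type*} [Fintype 𝓦] [Fintype ℰ] [Nonempty 𝓦] [Nonempty ℰ]
    [MeasurableSpace 𝓦] [MeasurableSingletonClass 𝓦]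
    [MeasurableSpace ℰ] [MeasurableSingletonClass ℰ]
    (W : Ω → 𝓦) (E : Ω → ℰ) (V : Ω → Fin 2) {K : ℕ} (A : Ω → Fin (K + 1))
    (k : Fin (K + 1)) (Y Yk Y0 : Ω → ℝ)
    (hW : Measurable W) (hE : Measurable E) (hV : Measurable V) (hA : Measurable A)
    (hY : Integrable Y P) (hYk : Integrable Yk P) (hY0 : Integrable Y0 P)
    (hV1 : 0 < P {ω | V ω = 1})
    -- (I-k) weak A-ignorability for arm k
    (hIk : ∀ (w : 𝓦) (e : ℰ), 0 < P {ω | A ω = k ∧ W ω = w ∧ E ω = e ∧ V ω = 1} →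
      condMean P Yk {ω | W ω = w ∧ E ω = e ∧ V ω = 1} =
        condMean P Yk {ω | A ω = k ∧ W ω = w ∧ E ω = e ∧ V ω = 1})
    -- (C-k) consistency in mean for arm k
    (hCk : ∀ (w : 𝓦) (e : ℰ), 0 < P {ω | A ω = k ∧ W ω = w ∧ E ω = e ∧ V ω = 1} →
      condMean P Yk {ω | A ω = k ∧ W ω = w ∧ E ω = e ∧ V ω = 1} =
        condMean P Y {ω | A ω = k ∧ W ω = w ∧ E ω = e ∧ V ω = 1})
    -- (P-k) positivity for arm k
    (hPk : ∀ (w : 𝓦) (e : ℰ), 0 < P {ω | W ω = w ∧ E ω = e ∧ V ω = 1} →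
      0 < P {ω | A ω = k ∧ W ω = w ∧ E ω = e ∧ V ω = 1})
    -- (Design) treatment k is only assigned when available
    (hdesign : P {ω | A ω = k ∧ V ω = 0} = 0)
    -- (Det) availability is a deterministic function of entry time
    (f : ℰ → Fin 2) (hdet : ∀ᵐ ω ∂P, V ω = f (E ω))
    :
    condMean P Yk {ω | V ω = 1} =
      (1 / (P {ω | V ω = 1}).toReal) *
        ∫ ω, (if A ω = k ∧ V ω = 1 then
            Y ω /
              ((P {ω' | A ω' = k ∧ W ω' = W ω ∧ E ω' = E ω ∧ V ω' = 1}).toReal /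
                (P {ω' | W ω' = W ω ∧ E ω' = E ω ∧ V ω' = 1}).toReal)
          else 0) ∂P := by
  classical
  -- measurability of the cells
  have hSm : ∀ (w : 𝓦) (e : ℰ), MeasurableSet {ω | W ω = w ∧ E ω = e ∧ V ω = 1} :=
    fun w e => (hW (measurableSet_singleton w)).inter
      ((hE (measurableSet_singleton e)).inter (hV (measurableSet_singleton 1)))
  have hTm : ∀ (w : 𝓦) (e : ℰ), MeasurableSet {ω | A ω = k ∧ W ω = w ∧ E ω = e ∧ V ω = 1} :=
    fun w e => (hA (measurableSet_singleton k)).inter (hSm w e)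
  -- key cell-wise identity
  have key : ∀ (w : 𝓦) (e : ℰ),
      (P {ω | W ω = w ∧ E ω = e ∧ V ω = 1}).toReal /
          (P {ω | A ω = k ∧ W ω = w ∧ E ω = e ∧ V ω = 1}).toReal *
        ∫ ω, ({ω | A ω = k ∧ W ω = w ∧ E ω = e ∧ V ω = 1} : Set Ω).indicator Y ω ∂P =
      ∫ ω, ({ω | W ω = w ∧ E ω = e ∧ V ω = 1} : Set Ω).indicator Yk ω ∂P := by
    intro w e
    by_cases hpos : 0 < P {ω | W ω = w ∧ E ω = e ∧ V ω = 1}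
    · have hTpos := hPk w e hpos
      have hSne : (P {ω | W ω = w ∧ E ω = e ∧ V ω = 1}).toReal ≠ 0 :=
        (ENNReal.toReal_pos hpos.ne' (measure_ne_top P _)).ne'
      have hTne : (P {ω | A ω = k ∧ W ω = w ∧ E ω = e ∧ V ω = 1}).toReal ≠ 0 :=
        (ENNReal.toReal_pos hTpos.ne' (measure_ne_top P _)).ne'
      have h12 := (hIk w e hTpos).trans (hCk w e hTpos)
      unfold condMean at h12
      rw [div_eq_div_iff hSne hTne] at h12
      rw [div_mul_eq_mul_div, div_eq_iff hTne]
      linear_combination -h12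
    · have h0 : P {ω | W ω = w ∧ E ω = e ∧ V ω = 1} = 0 :=
        nonpos_iff_eq_zero.mp (not_lt.mp hpos)
      rw [integral_indicator (hSm w e), Measure.restrict_eq_zero.mpr h0,
        integral_zero_measure, h0]
      simp
  -- pointwise expansion of the LHS numerator
  have hpt1 : ∀ ω, ({ω | V ω = 1} : Set Ω).indicator Yk ω =
      ∑ p : 𝓦 × ℰ,
        ({ω | W ω = p.1 ∧ E ω = p.2 ∧ V ω = 1} : Set Ω).indicator Yk ω := by
    intro ω
    by_cases hv : V ω = 1
    · rw [Set.indicator_of_mem (show ω ∈ {ω | V ω = 1} from hv),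
        Finset.sum_eq_single (⟨W ω, E ω⟩ : 𝓦 × ℰ)]
      · simp [Set.indicator_apply, hv]
      · intro p _ hp
        exact Set.indicator_of_notMem (fun hc => hp (Prod.ext hc.1.symm hc.2.1.symm)) Yk
      · intro h'; exact absurd (Finset.mem_univ _) h'
    · rw [Set.indicator_of_notMem (show ω ∉ {ω | V ω = 1} from hv)]
      exact (Finset.sum_eq_zero fun p _ =>
        Set.indicator_of_notMem (fun hc => hv hc.2.2) Yk).symm
  -- pointwise expansion of the RHS integrand
  have hpt2 : ∀ ω, (if A ω = k ∧ V ω = 1 then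
        Y ω /
          ((P {ω' | A ω' = k ∧ W ω' = W ω ∧ E ω' = E ω ∧ V ω' = 1}).toReal /
            (P {ω' | W ω' = W ω ∧ E ω' = E ω ∧ V ω' = 1}).toReal)
      else 0) =
      ∑ p : 𝓦 × ℰ,
        ({ω | A ω = k ∧ W ω = p.1 ∧ E ω = p.2 ∧ V ω = 1} : Set Ω).indicator
          (fun ω' => (P {ω'' | W ω'' = p.1 ∧ E ω'' = p.2 ∧ V ω'' = 1}).toReal /
            (P {ω'' | A ω'' = k ∧ W ω'' = p.1 ∧ E ω'' = p.2 ∧ V ω'' = 1}).toReal * Y ω') ω := by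
    intro ω
    by_cases h : A ω = k ∧ V ω = 1
    · rw [if_pos h, Finset.sum_eq_single (⟨W ω, E ω⟩ : 𝓦 × ℰ)]
      · rw [Set.indicator_apply]
        split_ifs with hmem
        · rw [div_div_eq_mul_div]; ring
        · exact absurd ⟨h.1, rfl, rfl, h.2⟩ hmem
      · intro p _ hp
        exact Set.indicator_of_notMem
          (fun hc => hp (Prod.ext hc.2.1.symm hc.2.2.1.symm)) _
      · intro h'; exact absurd (Finset.mem_univ _) h'
    · rw [if_neg h]
      exact (Finset.sum_eq_zero fun p _ =>
        Set.indicator_of_notMem (fun hc => h ⟨hc.1, hc.2.2.2⟩) _).symm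
  have hnum : ∫ ω, ({ω | V ω = 1} : Set Ω).indicator Yk ω ∂P =
      ∑ p : 𝓦 × ℰ,
        ∫ ω, ({ω | W ω = p.1 ∧ E ω = p.2 ∧ V ω = 1} : Set Ω).indicator Yk ω ∂P :=
    (integral_congr_ae (Filter.Eventually.of_forall hpt1)).trans
      (integral_finset_sum _ fun p _ => hYk.indicator (hSm p.1 p.2))
  have hrhs : (∫ ω, (if A ω = k ∧ V ω = 1 then
        Y ω /
          ((P {ω' | A ω' = k ∧ W ω' = W ω ∧ E ω' = E ω ∧ V ω' = 1}).toReal /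
            (P {ω' | W ω' = W ω ∧ E ω' = E ω ∧ V ω' = 1}).toReal)
      else 0) ∂P) =
      ∑ p : 𝓦 × ℰ,
        ∫ ω, ({ω | A ω = k ∧ W ω = p.1 ∧ E ω = p.2 ∧ V ω = 1} : Set Ω).indicator
          (fun ω' => (P {ω'' | W ω'' = p.1 ∧ E ω'' = p.2 ∧ V ω'' = 1}).toReal /
            (P {ω'' | A ω'' = k ∧ W ω'' = p.1 ∧ E ω'' = p.2 ∧ V ω'' = 1}).toReal * Y ω') ω ∂P :=
    (integral_congr_ae (Filter.Eventually.of_forall hpt2)).trans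
      (integral_finset_sum _ fun p _ => (hY.const_mul _).indicator (hTm p.1 p.2))
  have hterm : ∀ p : 𝓦 × ℰ,
      ∫ ω, ({ω | A ω = k ∧ W ω = p.1 ∧ E ω = p.2 ∧ V ω = 1} : Set Ω).indicator
          (fun ω' => (P {ω'' | W ω'' = p.1 ∧ E ω'' = p.2 ∧ V ω'' = 1}).toReal /
            (P {ω'' | A ω'' = k ∧ W ω'' = p.1 ∧ E ω'' = p.2 ∧ V ω'' = 1}).toReal * Y ω') ω ∂P =
      ∫ ω, ({ω | W ω = p.1 ∧ E ω = p.2 ∧ V ω = 1} : Set Ω).indicator Yk ω ∂P := by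
    intro p
    rw [integral_indicator (hTm p.1 p.2), integral_const_mul,
      ← integral_indicator (hTm p.1 p.2)]
    exact key p.1 p.2
  unfold condMean
  rw [hnum, hrhs, Finset.sum_congr rfl fun p _ => hterm p, one_div, inv_mul_eq_div]
end

section
/- Weighting (IPW) identification of the concurrent counterfactual mean under control using all (concurrent and non-concurrent) controls (appendix, identification based on weighting, control arm): under assumptions (I-0), (C-0), (P-0), (Pool) and (P-0-all), one has 𝔼[Y⁰ | V=1] = (1/𝒫(V=1)) · 𝔼[ 1{A=0} · Y · ν(W,E) / π₀(W,E) ], where ν(w,e) := 𝒫(V=1 | W=w, E=e) and π₀(w,e) := 𝒫(A=0 | W=w, E=e), and the integrand is defined to be 0 on the event {A ≠ 0}. -/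
open MeasureTheory Finset

/-- Weighting (IPW) identification of the concurrent counterfactual mean under control
using all (concurrent and non-concurrent) controls (appendix, identification based on
weighting, control arm): under (I-0), (C-0), (P-0), (Pool) and (P-0-all),
`𝔼[Y⁰ | V=1] = (1/𝒫(V=1)) · 𝔼[1{A=0} · Y · ν(W,E) / π₀(W,E)]`, where
`ν(w,e) := 𝒫(V=1 | W=w, E=e)` and `π₀(w,e) := 𝒫(A=0 | W=w, E=e)`, the integrand being
`0` on the event `{A ≠ 0}`. -/
theorem ipw_identification_control_all
    {Ω : Type*} [MeasurableSpace Ω] (P : Measure Ω) [IsProbabilityMeasure P]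
    {𝓦 ℰ : Type*} [Fintype 𝓦] [Fintype ℰ] [Nonempty 𝓦] [Nonempty ℰ]
    [MeasurableSpace 𝓦] [MeasurableSingletonClass 𝓦]
    [MeasurableSpace ℰ] [MeasurableSingletonClass ℰ]
    (W : Ω → 𝓦) (E : Ω → ℰ) (V : Ω → Fin 2) {K : ℕ} (A : Ω → Fin (K + 1))
    (k : Fin (K + 1)) (Y Yk Y0 : Ω → ℝ)
    (hW : Measurable W) (hE : Measurable E) (hV : Measurable V) (hA : Measurable A)
    (hY : Integrable Y P) (hYk : Integrable Yk P) (hY0 : Integrable Y0 P)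
    (hV1 : 0 < P {ω | V ω = 1})
    -- (I-0) weak A-ignorability for arm 0
    (hI0 : ∀ (w : 𝓦) (e : ℰ), 0 < P {ω | A ω = 0 ∧ W ω = w ∧ E ω = e ∧ V ω = 1} →
      condMean P Y0 {ω | W ω = w ∧ E ω = e ∧ V ω = 1} =
        condMean P Y0 {ω | A ω = 0 ∧ W ω = w ∧ E ω = e ∧ V ω = 1})
    -- (C-0) consistency in mean for arm 0
    (hC0 : ∀ (w : 𝓦) (e : ℰ), 0 < P {ω | A ω = 0 ∧ W ω = w ∧ E ω = e ∧ V ω = 1} →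
      condMean P Y0 {ω | A ω = 0 ∧ W ω = w ∧ E ω = e ∧ V ω = 1} =
        condMean P Y {ω | A ω = 0 ∧ W ω = w ∧ E ω = e ∧ V ω = 1})
    -- (P-0) positivity for arm 0
    (hP0 : ∀ (w : 𝓦) (e : ℰ), 0 < P {ω | W ω = w ∧ E ω = e ∧ V ω = 1} →
      0 < P {ω | A ω = 0 ∧ W ω = w ∧ E ω = e ∧ V ω = 1})
    -- (Pool) pooling of concurrent and non-concurrent controls
    (hPool : ∀ (w : 𝓦) (e : ℰ), 0 < P {ω | A ω = 0 ∧ W ω = w ∧ E ω = e ∧ V ω = 1} →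
      condMean P Y {ω | A ω = 0 ∧ W ω = w ∧ E ω = e ∧ V ω = 1} =
        condMean P Y {ω | A ω = 0 ∧ W ω = w ∧ E ω = e})
    -- (P-0-all) positivity of the shared control arm among all units
    (hP0all : ∀ (w : 𝓦) (e : ℰ), 0 < P {ω | W ω = w ∧ E ω = e} →
      0 < P {ω | A ω = 0 ∧ W ω = w ∧ E ω = e})
    :
    condMean P Y0 {ω | V ω = 1} =
      (1 / (P {ω | V ω = 1}).toReal) *
        ∫ ω, (if A ω = 0 then
            Y ω * ((P {ω' | W ω' = W ω ∧ E ω' = E ω ∧ V ω' = 1}).toReal /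
                (P {ω' | W ω' = W ω ∧ E ω' = E ω}).toReal) /
              ((P {ω' | A ω' = 0 ∧ W ω' = W ω ∧ E ω' = E ω}).toReal /
                (P {ω' | W ω' = W ω ∧ E ω' = E ω}).toReal)
          else 0) ∂P := by
  classical
  -- measurability of the basic sets
  have hmWE : ∀ (w : 𝓦) (e : ℰ), MeasurableSet {ω | W ω = w ∧ E ω = e} := fun w e =>
    (hW (measurableSet_singleton w)).inter (hE (measurableSet_singleton e))
  have hmWEV : ∀ (w : 𝓦) (e : ℰ), MeasurableSet {ω | W ω = w ∧ E ω = e ∧ V ω = 1} := fun w e =>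
    (hW (measurableSet_singleton w)).inter
      ((hE (measurableSet_singleton e)).inter (hV (measurableSet_singleton 1)))
  have hm0WE : ∀ (w : 𝓦) (e : ℰ), MeasurableSet {ω | A ω = 0 ∧ W ω = w ∧ E ω = e} := fun w e =>
    (hA (measurableSet_singleton 0)).inter
      ((hW (measurableSet_singleton w)).inter (hE (measurableSet_singleton e)))
  -- the weighted integrand per stratum
  set F : 𝓦 → ℰ → Ω → ℝ := fun w e ω =>
    Y ω * ((P {ω' | W ω' = w ∧ E ω' = e ∧ V ω' = 1}).toReal /
        (P {ω' | W ω' = w ∧ E ω' = e}).toReal) /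
      ((P {ω' | A ω' = 0 ∧ W ω' = w ∧ E ω' = e}).toReal /
        (P {ω' | W ω' = w ∧ E ω' = e}).toReal) with hF
  -- pointwise decomposition of the V=1 indicator
  have hpt1 : ∀ ω, ({ω | V ω = 1} : Set Ω).indicator Y0 ω =
      ∑ w : 𝓦, ∑ e : ℰ, ({ω | W ω = w ∧ E ω = e ∧ V ω = 1} : Set Ω).indicator Y0 ω := by
    intro ω
    by_cases hv : V ω = 1 <;>
      simp [Set.indicator_apply, hv, ite_and, Finset.sum_ite_eq]
  -- pointwise decomposition of the weighted integrand
  have hpt2 : ∀ ω, (if A ω = 0 then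
      Y ω * ((P {ω' | W ω' = W ω ∧ E ω' = E ω ∧ V ω' = 1}).toReal /
          (P {ω' | W ω' = W ω ∧ E ω' = E ω}).toReal) /
        ((P {ω' | A ω' = 0 ∧ W ω' = W ω ∧ E ω' = E ω}).toReal /
          (P {ω' | W ω' = W ω ∧ E ω' = E ω}).toReal)
      else 0) =
      ∑ w : 𝓦, ∑ e : ℰ, ({ω | A ω = 0 ∧ W ω = w ∧ E ω = e} : Set Ω).indicator (F w e) ω := by
    intro ω
    by_cases ha : A ω = 0 <;>
      simp [Set.indicator_apply, ha, ite_and, Finset.sum_ite_eq, hF]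
  -- integrability
  have hFint : ∀ (w : 𝓦) (e : ℰ), Integrable (F w e) P := fun w e =>
    (hY.mul_const _).div_const _
  -- the key per-stratum identity
  have key : ∀ (w : 𝓦) (e : ℰ),
      ∫ ω, ({ω | W ω = w ∧ E ω = e ∧ V ω = 1} : Set Ω).indicator Y0 ω ∂P =
      ∫ ω, ({ω | A ω = 0 ∧ W ω = w ∧ E ω = e} : Set Ω).indicator (F w e) ω ∂P := by
    intro w e
    set a : ℝ := (P {ω' | W ω' = w ∧ E ω' = e ∧ V ω' = 1}).toReal with hha
    set b : ℝ := (P {ω' | W ω' = w ∧ E ω' = e}).toReal with hhb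
    set c : ℝ := (P {ω' | A ω' = 0 ∧ W ω' = w ∧ E ω' = e}).toReal with hhc
    have hFfun : F w e = fun ω => Y ω * ((a / b) / (c / b)) := by
      funext ω; simp only [hF]; rw [mul_div_assoc]
    have hindmul : ∀ ω, ({ω | A ω = 0 ∧ W ω = w ∧ E ω = e} : Set Ω).indicator (F w e) ω =
        ({ω | A ω = 0 ∧ W ω = w ∧ E ω = e} : Set Ω).indicator Y ω * ((a / b) / (c / b)) := by
      intro ω
      rw [hFfun]
      simp only [Set.indicator_apply]
      split_ifs <;> simp
    by_cases hpos : 0 < P {ω | W ω = w ∧ E ω = e ∧ V ω = 1}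
    · -- positive stratum
      have hWEpos : 0 < P {ω | W ω = w ∧ E ω = e} :=
        hpos.trans_le (measure_mono fun ω h => ⟨h.1, h.2.1⟩)
      have h0WE := hP0all w e hWEpos
      have h0WEV := hP0 w e hpos
      have hane : a ≠ 0 := (ENNReal.toReal_pos hpos.ne' (measure_ne_top P _)).ne'
      have hbne : b ≠ 0 := (ENNReal.toReal_pos hWEpos.ne' (measure_ne_top P _)).ne'
      have hcne : c ≠ 0 := (ENNReal.toReal_pos h0WE.ne' (measure_ne_top P _)).ne'
      have hchain : condMean P Y0 {ω | W ω = w ∧ E ω = e ∧ V ω = 1} =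
          condMean P Y {ω | A ω = 0 ∧ W ω = w ∧ E ω = e} := by
        rw [hI0 w e h0WEV, hC0 w e h0WEV, hPool w e h0WEV]
      have hL : ∫ ω, ({ω | W ω = w ∧ E ω = e ∧ V ω = 1} : Set Ω).indicator Y0 ω ∂P =
          condMean P Y0 {ω | W ω = w ∧ E ω = e ∧ V ω = 1} * a := by
        rw [condMean, ← hha, div_mul_cancel₀ _ hane]
      have hR : ∫ ω, ({ω | A ω = 0 ∧ W ω = w ∧ E ω = e} : Set Ω).indicator Y ω ∂P =
          condMean P Y {ω | A ω = 0 ∧ W ω = w ∧ E ω = e} * c := by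
        rw [condMean, ← hhc, div_mul_cancel₀ _ hcne]
      calc ∫ ω, ({ω | W ω = w ∧ E ω = e ∧ V ω = 1} : Set Ω).indicator Y0 ω ∂P
          = condMean P Y {ω | A ω = 0 ∧ W ω = w ∧ E ω = e} * a := by rw [hL, hchain]
        _ = (condMean P Y {ω | A ω = 0 ∧ W ω = w ∧ E ω = e} * c) * ((a / b) / (c / b)) := by
            field_simp
        _ = (∫ ω, ({ω | A ω = 0 ∧ W ω = w ∧ E ω = e} : Set Ω).indicator Y ω ∂P) *
              ((a / b) / (c / b)) := by rw [hR]
        _ = ∫ ω, ({ω | A ω = 0 ∧ W ω = w ∧ E ω = e} : Set Ω).indicator Y ω * ((a / b) / (c / b)) ∂P := by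
            rw [integral_mul_const]
        _ = _ := by simp_rw [hindmul]
    · -- null stratum: both sides vanish
      have h0 : P {ω | W ω = w ∧ E ω = e ∧ V ω = 1} = 0 := by
        simpa [pos_iff_ne_zero, not_not] using hpos
      have ha0 : a = 0 := by rw [hha, h0]; simp
      have hLz : ∫ ω, ({ω | W ω = w ∧ E ω = e ∧ V ω = 1} : Set Ω).indicator Y0 ω ∂P = 0 := by
        rw [integral_indicator (hmWEV w e), Measure.restrict_eq_zero.mpr h0, integral_zero_measure]
      have hFz : ∀ ω, F w e ω = 0 := by
        intro ω; rw [hFfun, ha0]; simp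
      rw [hLz]
      simp [Set.indicator_apply, hFz]
  -- now assemble
  have hInt : ∫ ω, ({ω | V ω = 1} : Set Ω).indicator Y0 ω ∂P =
      ∫ ω, (if A ω = 0 then
          Y ω * ((P {ω' | W ω' = W ω ∧ E ω' = E ω ∧ V ω' = 1}).toReal /
              (P {ω' | W ω' = W ω ∧ E ω' = E ω}).toReal) /
            ((P {ω' | A ω' = 0 ∧ W ω' = W ω ∧ E ω' = E ω}).toReal /
              (P {ω' | W ω' = W ω ∧ E ω' = E ω}).toReal)
        else 0) ∂P := by
    calc ∫ ω, ({ω | V ω = 1} : Set Ω).indicator Y0 ω ∂P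
        = ∫ ω, ∑ w : 𝓦, ∑ e : ℰ,
            ({ω | W ω = w ∧ E ω = e ∧ V ω = 1} : Set Ω).indicator Y0 ω ∂P := by
          simp_rw [hpt1]
      _ = ∑ w : 𝓦, ∑ e : ℰ,
            ∫ ω, ({ω | W ω = w ∧ E ω = e ∧ V ω = 1} : Set Ω).indicator Y0 ω ∂P := by
          rw [integral_finset_sum _ fun w _ =>
            integrable_finset_sum _ fun e _ => hY0.indicator (hmWEV w e)]
          exact Finset.sum_congr rfl fun w _ =>
            integral_finset_sum _ fun e _ => hY0.indicator (hmWEV w e)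
      _ = ∑ w : 𝓦, ∑ e : ℰ,
            ∫ ω, ({ω | A ω = 0 ∧ W ω = w ∧ E ω = e} : Set Ω).indicator (F w e) ω ∂P := by
          exact Finset.sum_congr rfl fun w _ => Finset.sum_congr rfl fun e _ => key w e
      _ = ∫ ω, ∑ w : 𝓦, ∑ e : ℰ,
            ({ω | A ω = 0 ∧ W ω = w ∧ E ω = e} : Set Ω).indicator (F w e) ω ∂P := by
          rw [integral_finset_sum _ fun w _ =>
            integrable_finset_sum _ fun e _ => (hFint w e).indicator (hm0WE w e)]
          exact (Finset.sum_congr rfl fun w _ =>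
            integral_finset_sum _ fun e _ => (hFint w e).indicator (hm0WE w e)).symm
      _ = _ := by simp_rw [← hpt2]
  rw [condMean, hInt, one_div, inv_mul_eq_div]
end

section
/- Theorem 2 (identification of the average treatment effect ATE(k) in platform trials): under assumptions (P-k-all), (I-k-all), (C-k-all), (Extra), (P-0-all), (I-0-all) and (C-0-all), the average treatment effect ATE(k) := 𝔼[Yᵏ − Y⁰] satisfies ATE(k) = Σ_{(w,e): 𝒫(W=w,E=e)>0} (μ_oc(k,w,e) − μ_all(0,w,e)) · p(w,e). -/
open MeasureTheory Finset

section TotalExpectation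

variable {Ω : Type*} [MeasurableSpace Ω]

/-- This also holds on null events, where `condMean` takes the junk value `x / 0 = 0`. -/
theorem setIntegral_eq_condMean_mul (P : Measure Ω) [IsFiniteMeasure P] (X : Ω → ℝ)
    {B : Set Ω} (hB : MeasurableSet B) :
    ∫ ω in B, X ω ∂P = condMean P X B * (P B).toReal := by
  rcases eq_or_ne (P B) 0 with hnull | hpos
  · simp [hnull, setIntegral_measure_zero X hnull]
  · rw [condMean, integral_indicator hB,
      div_mul_cancel₀ _ (ENNReal.toReal_ne_zero.2 ⟨hpos, measure_ne_top P B⟩)]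

theorem integral_eq_sum_setIntegral_preimage {E ι : Type*} [NormedAddCommGroup E]
    [NormedSpace ℝ E] [Fintype ι] [MeasurableSpace ι] [MeasurableSingletonClass ι]
    {μ : Measure Ω} {X : Ω → E} (hX : Integrable X μ) {f : Ω → ι} (hf : Measurable f) :
    ∫ ω, X ω ∂μ = ∑ i, ∫ ω in f ⁻¹' {i}, X ω ∂μ := by
  rw [← integral_iUnion_fintype (fun i => hf (measurableSet_singleton i))
      (fun i j hij => Set.disjoint_singleton.2 hij |>.preimage f) fun _ => hX.integrableOn,
    Set.iUnion_eq_univ_iff.2 fun ω => ⟨f ω, rfl⟩, setIntegral_univ]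

theorem integral_eq_sum_sum_setIntegral {E α β : Type*} [NormedAddCommGroup E]
    [NormedSpace ℝ E] [Fintype α] [MeasurableSpace α] [MeasurableSingletonClass α]
    [Fintype β] [MeasurableSpace β] [MeasurableSingletonClass β]
    {μ : Measure Ω} {X : Ω → E} (hX : Integrable X μ) {f : Ω → α} {g : Ω → β}
    (hf : Measurable f) (hg : Measurable g) :
    ∫ ω, X ω ∂μ = ∑ a, ∑ b, ∫ ω in {ω | f ω = a ∧ g ω = b}, X ω ∂μ := by
  rw [integral_eq_sum_setIntegral_preimage hX (hf.prodMk hg), Fintype.sum_prod_type]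
  simp only [Set.preimage, Set.mem_singleton_iff, Prod.mk.injEq]

end TotalExpectation

theorem ATE_identification_general
    {Ω : Type*} [MeasurableSpace Ω] (P : Measure Ω) [IsProbabilityMeasure P]
    {𝓦 ℰ : Type*} [Fintype 𝓦] [Fintype ℰ]
    [MeasurableSpace 𝓦] [MeasurableSingletonClass 𝓦]
    [MeasurableSpace ℰ] [MeasurableSingletonClass ℰ]
    (W : Ω → 𝓦) (E : Ω → ℰ) (V : Ω → Fin 2) {K : ℕ} (A : Ω → Fin (K + 1))
    (k : Fin (K + 1)) (Y Yk Y0 : Ω → ℝ)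
    (hW : Measurable W) (hE : Measurable E)
    (hYk : Integrable Yk P) (hY0 : Integrable Y0 P)
    -- (P-k-all) positivity for arm k among all units
    (hPkall : ∀ (w : 𝓦) (e : ℰ), 0 < P {ω | W ω = w ∧ E ω = e} →
      0 < P {ω | A ω = k ∧ W ω = w ∧ E ω = e ∧ V ω = 1})
    -- (I-k-all) weak A-ignorability for arm k among all units
    (hIkall : ∀ (w : 𝓦) (e : ℰ), 0 < P {ω | A ω = k ∧ W ω = w ∧ E ω = e} →
      condMean P Yk {ω | W ω = w ∧ E ω = e} =
        condMean P Yk {ω | A ω = k ∧ W ω = w ∧ E ω = e})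
    -- (C-k-all) consistency in mean for arm k among all units
    (hCkall : ∀ (w : 𝓦) (e : ℰ), 0 < P {ω | A ω = k ∧ W ω = w ∧ E ω = e} →
      condMean P Yk {ω | A ω = k ∧ W ω = w ∧ E ω = e} =
        condMean P Y {ω | A ω = k ∧ W ω = w ∧ E ω = e})
    -- (Extra) extrapolation of outcome mechanism among the treated
    (hExtra : ∀ (w : 𝓦) (e : ℰ), 0 < P {ω | A ω = k ∧ W ω = w ∧ E ω = e ∧ V ω = 1} →
      condMean P Y {ω | A ω = k ∧ W ω = w ∧ E ω = e ∧ V ω = 1} =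
        condMean P Y {ω | A ω = k ∧ W ω = w ∧ E ω = e})
    -- (P-0-all) positivity of the shared control arm among all units
    (hP0all : ∀ (w : 𝓦) (e : ℰ), 0 < P {ω | W ω = w ∧ E ω = e} →
      0 < P {ω | A ω = 0 ∧ W ω = w ∧ E ω = e})
    -- (I-0-all) weak A-ignorability for arm 0 among all units
    (hI0all : ∀ (w : 𝓦) (e : ℰ), 0 < P {ω | A ω = 0 ∧ W ω = w ∧ E ω = e} →
      condMean P Y0 {ω | W ω = w ∧ E ω = e} =
        condMean P Y0 {ω | A ω = 0 ∧ W ω = w ∧ E ω = e})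
    -- (C-0-all) consistency in mean for arm 0 among all units
    (hC0all : ∀ (w : 𝓦) (e : ℰ), 0 < P {ω | A ω = 0 ∧ W ω = w ∧ E ω = e} →
      condMean P Y0 {ω | A ω = 0 ∧ W ω = w ∧ E ω = e} =
        condMean P Y {ω | A ω = 0 ∧ W ω = w ∧ E ω = e})
    :
    ∫ ω, (Yk ω - Y0 ω) ∂P =
      ∑ w : 𝓦, ∑ e : ℰ,
        if 0 < P {ω | W ω = w ∧ E ω = e} then
          (condMean P Y {ω | A ω = k ∧ W ω = w ∧ E ω = e ∧ V ω = 1} -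
               condMean P Y {ω | A ω = 0 ∧ W ω = w ∧ E ω = e}) *
            (P {ω | W ω = w ∧ E ω = e}).toReal
        else 0 := by
  have hcell : ∀ w e, MeasurableSet {ω | W ω = w ∧ E ω = e} := fun w e =>
    (hW (measurableSet_singleton w)).inter (hE (measurableSet_singleton e))
  rw [integral_eq_sum_sum_setIntegral (X := fun ω => Yk ω - Y0 ω) (hYk.sub hY0) hW hE]
  refine sum_congr rfl fun w _ => sum_congr rfl fun e _ => ?_
  split_ifs with hpos
  · have hTreatedAvail := hPkall w e hpos
    have hTreated : 0 < P {ω | A ω = k ∧ W ω = w ∧ E ω = e} :=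
      hTreatedAvail.trans_le (measure_mono fun ω h => ⟨h.1, h.2.1, h.2.2.1⟩)
    have hControl := hP0all w e hpos
    rw [integral_sub hYk.integrableOn hY0.integrableOn,
      setIntegral_eq_condMean_mul P _ (hcell w e), setIntegral_eq_condMean_mul P _ (hcell w e),
      hIkall w e hTreated, hCkall w e hTreated, ← hExtra w e hTreatedAvail,
      hI0all w e hControl, hC0all w e hControl, sub_mul]
  · exact setIntegral_measure_zero _ (nonpos_iff_eq_zero.1 (not_lt.1 hpos))

/-- Theorem 2: identification of the average treatment effect
`ATE(k) := 𝔼[Yᵏ − Y⁰]` in platform trials, under (P-k-all), (I-k-all), (C-k-all),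
(Extra), (P-0-all), (I-0-all) and (C-0-all). -/
theorem ATE_identification
    {Ω : Type*} [MeasurableSpace Ω] (P : Measure Ω) [IsProbabilityMeasure P]
    {𝓦 ℰ : Type*} [Fintype 𝓦] [Fintype ℰ] [Nonempty 𝓦] [Nonempty ℰ]
    [MeasurableSpace 𝓦] [MeasurableSingletonClass 𝓦]
    [MeasurableSpace ℰ] [MeasurableSingletonClass ℰ]
    (W : Ω → 𝓦) (E : Ω → ℰ) (V : Ω → Fin 2) {K : ℕ} (A : Ω → Fin (K + 1))
    (k : Fin (K + 1)) (Y Yk Y0 : Ω → ℝ)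
    (hW : Measurable W) (hE : Measurable E) (hV : Measurable V) (hA : Measurable A)
    (hY : Integrable Y P) (hYk : Integrable Yk P) (hY0 : Integrable Y0 P)
    -- (P-k-all) positivity for arm k among all units
    (hPkall : ∀ (w : 𝓦) (e : ℰ), 0 < P {ω | W ω = w ∧ E ω = e} →
      0 < P {ω | A ω = k ∧ W ω = w ∧ E ω = e ∧ V ω = 1})
    -- (I-k-all) weak A-ignorability for arm k among all units
    (hIkall : ∀ (w : 𝓦) (e : ℰ), 0 < P {ω | A ω = k ∧ W ω = w ∧ E ω = e} →
      condMean P Yk {ω | W ω = w ∧ E ω = e} =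
        condMean P Yk {ω | A ω = k ∧ W ω = w ∧ E ω = e})
    -- (C-k-all) consistency in mean for arm k among all units
    (hCkall : ∀ (w : 𝓦) (e : ℰ), 0 < P {ω | A ω = k ∧ W ω = w ∧ E ω = e} →
      condMean P Yk {ω | A ω = k ∧ W ω = w ∧ E ω = e} =
        condMean P Y {ω | A ω = k ∧ W ω = w ∧ E ω = e})
    -- (Extra) extrapolation of outcome mechanism among the treated
    (hExtra : ∀ (w : 𝓦) (e : ℰ), 0 < P {ω | A ω = k ∧ W ω = w ∧ E ω = e ∧ V ω = 1} →
      condMean P Y {ω | A ω = k ∧ W ω = w ∧ E ω = e ∧ V ω = 1} =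
        condMean P Y {ω | A ω = k ∧ W ω = w ∧ E ω = e})
    -- (P-0-all) positivity of the shared control arm among all units
    (hP0all : ∀ (w : 𝓦) (e : ℰ), 0 < P {ω | W ω = w ∧ E ω = e} →
      0 < P {ω | A ω = 0 ∧ W ω = w ∧ E ω = e})
    -- (I-0-all) weak A-ignorability for arm 0 among all units
    (hI0all : ∀ (w : 𝓦) (e : ℰ), 0 < P {ω | A ω = 0 ∧ W ω = w ∧ E ω = e} →
      condMean P Y0 {ω | W ω = w ∧ E ω = e} =
        condMean P Y0 {ω | A ω = 0 ∧ W ω = w ∧ E ω = e})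
    -- (C-0-all) consistency in mean for arm 0 among all units
    (hC0all : ∀ (w : 𝓦) (e : ℰ), 0 < P {ω | A ω = 0 ∧ W ω = w ∧ E ω = e} →
      condMean P Y0 {ω | A ω = 0 ∧ W ω = w ∧ E ω = e} =
        condMean P Y {ω | A ω = 0 ∧ W ω = w ∧ E ω = e})
    :
    ∫ ω, (Yk ω - Y0 ω) ∂P =
      ∑ w : 𝓦, ∑ e : ℰ,
        if 0 < P {ω | W ω = w ∧ E ω = e} then
          (condMean P Y {ω | A ω = k ∧ W ω = w ∧ E ω = e ∧ V ω = 1} -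
               condMean P Y {ω | A ω = 0 ∧ W ω = w ∧ E ω = e}) *
            (P {ω | W ω = w ∧ E ω = e}).toReal
        else 0 :=
  ATE_identification_general P W E V A k Y Yk Y0 hW hE hYk hY0 hPkall hIkall hCkall hExtra hP0all
    hI0all hC0all
end

section
/- The candidate efficient influence function (5) for cATE(k) (the version leveraging non-concurrent controls) has mean zero (property underlying Theorem 3, equation (5)): define ψ' := Σ_{(w,e): 𝒫(W=w,E=e,V=1)>0} (μ_oc(1,w,e) − μ_all(0,w,e)) · p(w,e|V=1) and the random variable φ₂ := (1{V=1}/𝒫(V=1)) · (A/π(W,E)) · (Y − μ_oc(1,W,E)) − ((1−A)/(1−π_all(W,E))) · (ν(W,E)/𝒫(V=1)) · (Y − μ_all(0,W,E)) + (1{V=1}/𝒫(V=1)) · (μ_oc(1,W,E) − μ_all(0,W,E)) − ψ', where terms multiplied by 1{V=1} are set to 0 on {V=0} and terms multiplied by (1−A) are set to 0 on {A=1}. Then 𝔼[φ₂] = 0. -/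
/-!
Stratify by `X = (W, E)`, which takes finitely many values. On the stratum `{X = x}` the two
residual terms of `φ₂` are constants times `1_S (Y - 𝔼[Y | S ∩ {X = x}])`, which integrate to
zero for any constant; the remaining term is a function of `X` on `{V = 1}`, whose integral is
`∑ₓ (μ_oc(1,x) - μ_all(0,x)) 𝒫(V = 1, X = x) / 𝒫(V = 1) = ψ'`.
-/

open MeasureTheory Finset

section Stratification

variable {Ω : Type*} [MeasurableSpace Ω] {P : Measure Ω} {Y : Ω → ℝ}

theorem setIntegral_sub_condMean [IsFiniteMeasure P] {T : Set Ω} (hT : MeasurableSet T)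
    (hY : IntegrableOn Y T P) : ∫ ω in T, (Y ω - condMean P Y T) ∂P = 0 := by
  rw [integral_sub hY (integrableOn_const (measure_ne_top P T)), setIntegral_const, smul_eq_mul,
    condMean, integral_indicator hT, measureReal_def]
  rcases eq_or_ne (P T).toReal 0 with h | h
  · have hT0 : P T = 0 := ((ENNReal.toReal_eq_zero_iff _).1 h).resolve_right (measure_ne_top P T)
    rw [h, zero_mul, Measure.restrict_eq_zero.2 hT0, integral_zero_measure, sub_zero]
  · rw [mul_div_cancel₀ _ h, sub_self]

variable {𝓧 : Type*} [MeasurableSpace 𝓧] [MeasurableSingletonClass 𝓧] {X : Ω → 𝓧}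

theorem setIntegral_fiber_comp (hX : Measurable X) {S : Set Ω} (hS : MeasurableSet S)
    (f : 𝓧 → Ω → ℝ) (x : 𝓧) :
    ∫ ω in X ⁻¹' {x}, S.indicator (fun ω => f (X ω) ω) ω ∂P =
      ∫ ω in S ∩ X ⁻¹' {x}, f x ω ∂P := by
  rw [setIntegral_indicator hS, Set.inter_comm]
  exact setIntegral_congr_fun (hS.inter (hX (measurableSet_singleton x)))
    fun ω hω => by rw [hω.2]

variable [Fintype 𝓧]

theorem integral_eq_sum_setIntegral_fiber (hX : Measurable X) {f : Ω → ℝ}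
    (hf : Integrable f P) : ∫ ω, f ω ∂P = ∑ x, ∫ ω in X ⁻¹' {x}, f ω ∂P := by
  rw [← integral_iUnion_fintype (fun x => hX (measurableSet_singleton x))
    (pairwise_disjoint_fiber X) (fun _ => hf.integrableOn),
    Set.iUnion_eq_univ_iff.2 fun ω => ⟨X ω, rfl⟩, setIntegral_univ]

theorem integrable_fintype_comp [IsFiniteMeasure P] (hX : Measurable X) (g : 𝓧 → ℝ) :
    Integrable (fun ω => g (X ω)) P :=
  (Integrable.of_finite (μ := P.map X)).comp_measurable hX

theorem integrable_fintype_comp_mul (hX : Measurable X) (c : 𝓧 → ℝ) {f : Ω → ℝ}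
    (hf : Integrable f P) : Integrable (fun ω => c (X ω) * f ω) P := by
  obtain ⟨C, hC⟩ := Finite.exists_le fun x => ‖c x‖
  exact hf.bdd_mul ((measurable_of_finite c).comp hX).aestronglyMeasurable
    (ae_of_all _ fun ω => hC (X ω))

theorem integral_indicator_comp_eq_sum [IsFiniteMeasure P] (hX : Measurable X) {S : Set Ω}
    (hS : MeasurableSet S) (g : 𝓧 → ℝ) :
    ∫ ω, S.indicator (fun ω => g (X ω)) ω ∂P = ∑ x, g x * P.real (S ∩ X ⁻¹' {x}) := by
  rw [integral_eq_sum_setIntegral_fiber hX ((integrable_fintype_comp hX g).indicator hS)]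
  refine Finset.sum_congr rfl fun x _ => ?_
  rw [setIntegral_fiber_comp hX hS (fun x _ => g x), setIntegral_const, smul_eq_mul, mul_comm]

theorem integrable_indicator_mul_sub [IsFiniteMeasure P] (hX : Measurable X) {S : Set Ω}
    (hS : MeasurableSet S) (hY : Integrable Y P) (c μ : 𝓧 → ℝ) :
    Integrable (S.indicator fun ω => c (X ω) * (Y ω - μ (X ω))) P :=
  (integrable_fintype_comp_mul hX c (hY.sub (integrable_fintype_comp hX μ))).indicator hS

theorem integral_indicator_mul_sub_condMean [IsFiniteMeasure P] (hX : Measurable X)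
    {S : Set Ω} (hS : MeasurableSet S) (hY : Integrable Y P) (c μ : 𝓧 → ℝ)
    (hμ : ∀ x, μ x = condMean P Y (S ∩ X ⁻¹' {x})) :
    ∫ ω, S.indicator (fun ω => c (X ω) * (Y ω - μ (X ω))) ω ∂P = 0 := by
  rw [integral_eq_sum_setIntegral_fiber hX (integrable_indicator_mul_sub hX hS hY c μ)]
  refine Finset.sum_eq_zero fun x _ => ?_
  rw [setIntegral_fiber_comp hX hS (fun x ω => c x * (Y ω - μ x)), integral_const_mul, hμ,
    setIntegral_sub_condMean (hS.inter (hX (measurableSet_singleton x))) hY.integrableOn,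
    mul_zero]

theorem integral_residuals_add_indicator_sub [IsProbabilityMeasure P] (hX : Measurable X)
    (hY : Integrable Y P) {S₁ S₀ T : Set Ω} (hS₁ : MeasurableSet S₁) (hS₀ : MeasurableSet S₀)
    (hT : MeasurableSet T) (c₁ c₀ μ₁ μ₀ g : 𝓧 → ℝ)
    (hμ₁ : ∀ x, μ₁ x = condMean P Y (S₁ ∩ X ⁻¹' {x}))
    (hμ₀ : ∀ x, μ₀ x = condMean P Y (S₀ ∩ X ⁻¹' {x})) (ψ : ℝ) :
    ∫ ω, (S₁.indicator (fun ω => c₁ (X ω) * (Y ω - μ₁ (X ω))) ω -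
        S₀.indicator (fun ω => c₀ (X ω) * (Y ω - μ₀ (X ω))) ω +
        T.indicator (fun ω => g (X ω)) ω - ψ) ∂P =
      ∑ x, g x * P.real (T ∩ X ⁻¹' {x}) - ψ := by
  have hi₁ := integrable_indicator_mul_sub hX hS₁ hY c₁ μ₁
  have hi₀ := integrable_indicator_mul_sub hX hS₀ hY c₀ μ₀
  have hiT := (integrable_fintype_comp (P := P) hX g).indicator hT
  rw [integral_sub ?_ (integrable_const ψ), integral_add ?_ hiT,
    integral_sub hi₁ hi₀, integral_indicator_mul_sub_condMean hX hS₁ hY c₁ μ₁ hμ₁,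
    integral_indicator_mul_sub_condMean hX hS₀ hY c₀ μ₀ hμ₀,
    integral_indicator_comp_eq_sum hX hT g, integral_const, probReal_univ, one_smul, sub_zero,
    zero_add]
  exacts [hi₁.sub hi₀, (hi₁.sub hi₀).add hiT]

end Stratification

theorem eif_all_controls_mean_zero_general
    {Ω : Type*} [MeasurableSpace Ω] (P : Measure Ω) [IsProbabilityMeasure P]
    {𝓦 ℰ : Type*} [Fintype 𝓦] [Fintype ℰ]
    [MeasurableSpace 𝓦] [MeasurableSingletonClass 𝓦]
    [MeasurableSpace ℰ] [MeasurableSingletonClass ℰ]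
    (W : Ω → 𝓦) (E : Ω → ℰ) (V : Ω → Fin 2) (A : Ω → Fin 2) (Y : Ω → ℝ)
    (hW : Measurable W) (hE : Measurable E) (hV : Measurable V) (hA : Measurable A)
    (hY : Integrable Y P)
    -- the outcome regression among concurrent units
    (μoc : Fin 2 → 𝓦 → ℰ → ℝ)
    (hμoc : ∀ (a : Fin 2) (w : 𝓦) (e : ℰ), μoc a w e =
      condMean P Y {ω | A ω = a ∧ W ω = w ∧ E ω = e ∧ V ω = 1})
    -- the pooled outcome regression under control
    (μall : 𝓦 → ℰ → ℝ)
    (hμall : ∀ (w : 𝓦) (e : ℰ), μall w e =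
      condMean P Y {ω | A ω = 0 ∧ W ω = w ∧ E ω = e})
    -- the propensity score among concurrent units
    (π : 𝓦 → ℰ → ℝ)
    -- the propensity score among all units
    (πall : 𝓦 → ℰ → ℝ)
    -- the availability probability ν(w,e) = 𝒫(V=1 | W=w, E=e)
    (ν : 𝓦 → ℰ → ℝ)
    -- the estimand ψ' = cATE expressed with the pooled control regression
    (ψ' : ℝ)
    (hψ' : ψ' = ∑ w : 𝓦, ∑ e : ℰ,
      if 0 < P {ω | W ω = w ∧ E ω = e ∧ V ω = 1} then
        (μoc 1 w e - μall w e) *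
          ((P {ω | W ω = w ∧ E ω = e ∧ V ω = 1}).toReal / (P {ω | V ω = 1}).toReal)
      else 0)
    -- the candidate efficient influence function (5)
    (φ₂ : Ω → ℝ)
    (hφ₂ : ∀ ω, φ₂ ω =
      (if V ω = 1 then
          (1 / (P {ω' | V ω' = 1}).toReal) *
            (((A ω : ℕ) : ℝ) / π (W ω) (E ω)) * (Y ω - μoc 1 (W ω) (E ω))
        else 0) -
      (if A ω = 1 then 0 else
          ((1 - ((A ω : ℕ) : ℝ)) / (1 - πall (W ω) (E ω))) *
            (ν (W ω) (E ω) / (P {ω' | V ω' = 1}).toReal) *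
            (Y ω - μall (W ω) (E ω))) +
      (if V ω = 1 then
          (1 / (P {ω' | V ω' = 1}).toReal) *
            (μoc 1 (W ω) (E ω) - μall (W ω) (E ω))
        else 0) - ψ') :
    ∫ ω, φ₂ ω ∂P = 0 := by
  set p := (P {ω | V ω = 1}).toReal
  have hφ : ∀ ω, φ₂ ω =
      {ω | A ω = 1 ∧ V ω = 1}.indicator
          (fun ω => 1 / p * (1 / π (W ω) (E ω)) * (Y ω - μoc 1 (W ω) (E ω))) ω -
        {ω | A ω = 0}.indicator (fun ω => 1 / (1 - πall (W ω) (E ω)) * (ν (W ω) (E ω) / p) *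
          (Y ω - μall (W ω) (E ω))) ω +
        {ω | V ω = 1}.indicator (fun ω => 1 / p * (μoc 1 (W ω) (E ω) - μall (W ω) (E ω))) ω -
        ψ' := by
    intro ω
    simp only [hφ₂, Set.indicator_apply, Set.mem_ofPred_eq]
    obtain hA | hA : A ω = 0 ∨ A ω = 1 := by omega
    all_goals obtain hV | hV : V ω = 0 ∨ V ω = 1 := by omega
    all_goals simp [hA, hV]
  rw [integral_congr_ae (ae_of_all _ hφ)]
  refine (integral_residuals_add_indicator_sub (X := fun ω => (W ω, E ω))
    (S₁ := {ω | A ω = 1 ∧ V ω = 1}) (S₀ := {ω | A ω = 0}) (T := {ω | V ω = 1}) (hW.prodMk hE)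
    hY ((hA (measurableSet_singleton 1)).inter (hV (measurableSet_singleton 1)))
    (hA (measurableSet_singleton 0)) (hV (measurableSet_singleton 1))
    (fun x => 1 / p * (1 / π x.1 x.2)) (fun x => 1 / (1 - πall x.1 x.2) * (ν x.1 x.2 / p))
    (fun x => μoc 1 x.1 x.2) (fun x => μall x.1 x.2)
    (fun x => 1 / p * (μoc 1 x.1 x.2 - μall x.1 x.2)) (fun ⟨w, e⟩ => ?_) (fun ⟨w, e⟩ => ?_)
    ψ').trans ?_
  · rw [hμoc]
    congr 1; ext ω
    simp only [Set.mem_ofPred_eq, Set.mem_inter_iff, Set.mem_preimage,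
      Set.mem_singleton_iff, Prod.ext_iff]
    tauto
  · rw [hμall]
    congr 1; ext ω; simp [Prod.ext_iff]
  · rw [sub_eq_zero, hψ', Fintype.sum_prod_type]
    refine Finset.sum_congr rfl fun w _ => Finset.sum_congr rfl fun e _ => ?_
    have hfiber : {ω | V ω = 1} ∩ (fun ω => (W ω, E ω)) ⁻¹' {(w, e)} =
        {ω | W ω = w ∧ E ω = e ∧ V ω = 1} := by
      ext ω
      simp only [Set.mem_ofPred_eq, Set.mem_inter_iff, Set.mem_preimage,
        Set.mem_singleton_iff, Prod.ext_iff]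
      tauto
    rw [hfiber, measureReal_def]
    split_ifs with h
    · ring
    · rw [not_lt, nonpos_iff_eq_zero] at h
      rw [h, ENNReal.toReal_zero, mul_zero]

/-- The candidate efficient influence function (5) for `cATE(k)` (the version leveraging
non-concurrent controls) has mean zero (property underlying Theorem 3, equation (5)):
with `ψ' := Σ_{(w,e) : 𝒫(W=w,E=e,V=1)>0} (μ_oc(1,w,e) − μ_all(0,w,e)) · p(w,e|V=1)` and
`φ₂ := (1{V=1}/𝒫(V=1)) · (A/π(W,E)) · (Y − μ_oc(1,W,E))
  − ((1−A)/(1−π_all(W,E))) · (ν(W,E)/𝒫(V=1)) · (Y − μ_all(0,W,E))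
  + (1{V=1}/𝒫(V=1)) · (μ_oc(1,W,E) − μ_all(0,W,E)) − ψ'`
(terms multiplied by `1{V=1}` set to `0` on `{V=0}`, terms multiplied by `(1−A)` set to
`0` on `{A=1}`), one has `𝔼[φ₂] = 0`. -/
theorem eif_all_controls_mean_zero
    {Ω : Type*} [MeasurableSpace Ω] (P : Measure Ω) [IsProbabilityMeasure P]
    {𝓦 ℰ : Type*} [Fintype 𝓦] [Fintype ℰ] [Nonempty 𝓦] [Nonempty ℰ]
    [MeasurableSpace 𝓦] [MeasurableSingletonClass 𝓦]
    [MeasurableSpace ℰ] [MeasurableSingletonClass ℰ]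
    (W : Ω → 𝓦) (E : Ω → ℰ) (V : Ω → Fin 2) (A : Ω → Fin 2) (Y : Ω → ℝ)
    (hW : Measurable W) (hE : Measurable E) (hV : Measurable V) (hA : Measurable A)
    (hY : Integrable Y P)
    (hV1 : 0 < P {ω | V ω = 1})
    -- positivity of the treated arm among concurrent units
    (hpos1 : ∀ (w : 𝓦) (e : ℰ), 0 < P {ω | W ω = w ∧ E ω = e ∧ V ω = 1} →
      0 < P {ω | A ω = 1 ∧ W ω = w ∧ E ω = e ∧ V ω = 1})
    -- positivity of the shared control arm among all units
    (hpos0all : ∀ (w : 𝓦) (e : ℰ), 0 < P {ω | W ω = w ∧ E ω = e} →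
      0 < P {ω | A ω = 0 ∧ W ω = w ∧ E ω = e})
    -- by design, treatment is only assigned when available
    (hdesign : P {ω | A ω = 1 ∧ V ω = 0} = 0)
    -- the outcome regression among concurrent units
    (μoc : Fin 2 → 𝓦 → ℰ → ℝ)
    (hμoc : ∀ (a : Fin 2) (w : 𝓦) (e : ℰ), μoc a w e =
      condMean P Y {ω | A ω = a ∧ W ω = w ∧ E ω = e ∧ V ω = 1})
    -- the pooled outcome regression under control
    (μall : 𝓦 → ℰ → ℝ)
    (hμall : ∀ (w : 𝓦) (e : ℰ), μall w e =
      condMean P Y {ω | A ω = 0 ∧ W ω = w ∧ E ω = e})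
    -- the propensity score among concurrent units
    (π : 𝓦 → ℰ → ℝ)
    (hπ : ∀ (w : 𝓦) (e : ℰ), π w e =
      (P {ω | A ω = 1 ∧ W ω = w ∧ E ω = e ∧ V ω = 1}).toReal /
        (P {ω | W ω = w ∧ E ω = e ∧ V ω = 1}).toReal)
    -- the propensity score among all units
    (πall : 𝓦 → ℰ → ℝ)
    (hπall : ∀ (w : 𝓦) (e : ℰ), πall w e =
      (P {ω | A ω = 1 ∧ W ω = w ∧ E ω = e}).toReal /
        (P {ω | W ω = w ∧ E ω = e}).toReal)
    -- the availability probability ν(w,e) = 𝒫(V=1 | W=w, E=e)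
    (ν : 𝓦 → ℰ → ℝ)
    (hν : ∀ (w : 𝓦) (e : ℰ), ν w e =
      (P {ω | W ω = w ∧ E ω = e ∧ V ω = 1}).toReal /
        (P {ω | W ω = w ∧ E ω = e}).toReal)
    -- the estimand ψ' = cATE expressed with the pooled control regression
    (ψ' : ℝ)
    (hψ' : ψ' = ∑ w : 𝓦, ∑ e : ℰ,
      if 0 < P {ω | W ω = w ∧ E ω = e ∧ V ω = 1} then
        (μoc 1 w e - μall w e) *
          ((P {ω | W ω = w ∧ E ω = e ∧ V ω = 1}).toReal / (P {ω | V ω = 1}).toReal)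
      else 0)
    -- the candidate efficient influence function (5)
    (φ₂ : Ω → ℝ)
    (hφ₂ : ∀ ω, φ₂ ω =
      (if V ω = 1 then
          (1 / (P {ω' | V ω' = 1}).toReal) *
            (((A ω : ℕ) : ℝ) / π (W ω) (E ω)) * (Y ω - μoc 1 (W ω) (E ω))
        else 0) -
      (if A ω = 1 then 0 else
          ((1 - ((A ω : ℕ) : ℝ)) / (1 - πall (W ω) (E ω))) *
            (ν (W ω) (E ω) / (P {ω' | V ω' = 1}).toReal) *
            (Y ω - μall (W ω) (E ω))) +
      (if V ω = 1 then
          (1 / (P {ω' | V ω' = 1}).toReal) *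
            (μoc 1 (W ω) (E ω) - μall (W ω) (E ω))
        else 0) - ψ') :
    ∫ ω, φ₂ ω ∂P = 0 :=
  eif_all_controls_mean_zero_general P W E V A Y hW hE hV hA hY μoc hμoc μall hμall π πall ν ψ' hψ'
    φ₂ hφ₂
end
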